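/- arXiv:1810.00339 — 10 statements merged into one kernel-verified Lean document; each statement's English description precedes it below -/
import Mathlib

section
/- The 'sequential straightening' motion planner on directed ℝ^{n+1} is continuous: the map σ sending a pair (x,y) with x ≤ y coordinatewise to the directed path that first increases coordinate 0 from x_0 to y_0 (on the subinterval [0, 1/(n+1)]), then coordinate 1 from x_1 to y_1 (on [1/(n+1), 2/(n+1)]), and so on, is a continuous map from Γ = {(x,y) ∈ ℝ^{n+1} × ℝ^{n+1} : x_i ≤ y_i for all i} to the path space of ℝ^{n+1} (with the compact-open topology), and it is a section of the endpoint map γ ↦ (γ(0), γ(1)). -/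
open unitInterval

/-- The sequential straightening path in `ℝ^{n+1}` from `p.1` to `p.2`:
on the `j`-th subinterval `[j/(n+1), (j+1)/(n+1)]` only coordinate `j` changes,
linearly from `p.1 j` to `p.2 j` (earlier coordinates are already at their
`y`-values, later coordinates still at their `x`-values). -/
noncomputable def seqStraight (n : ℕ) (p : (Fin (n + 1) → ℝ) × (Fin (n + 1) → ℝ))
    (t : ℝ) : Fin (n + 1) → ℝ :=
  fun j => p.1 j + min 1 (max 0 ((n + 1) * t - (j : ℕ))) * (p.2 j - p.1 j)

/-- The sequential straightening motion planner on directed `ℝ^{n+1}` is a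
continuous section of the endpoint map: there is a continuous map
`sec : Γ → P(ℝ^{n+1})` (compact-open topology) given by the explicit piecewise
linear formula, and `sec (x,y)` runs from `x` to `y`. -/
theorem seqStraight_continuous_section (n : ℕ) :
    ∃ sec : C({p : (Fin (n + 1) → ℝ) × (Fin (n + 1) → ℝ) // ∀ i, p.1 i ≤ p.2 i},
            C(unitInterval, Fin (n + 1) → ℝ)),
      (∀ p t, sec p t = seqStraight n p.1 (t : ℝ)) ∧
      (∀ p, sec p 0 = p.1.1 ∧ sec p 1 = p.1.2) := by
  have hF : Continuous (fun q : {p : (Fin (n + 1) → ℝ) × (Fin (n + 1) → ℝ) //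
      ∀ i, p.1 i ≤ p.2 i} × unitInterval => seqStraight n q.1.1 (q.2 : ℝ)) := by
    unfold seqStraight
    apply continuous_pi
    intro j
    fun_prop
  refine ⟨ContinuousMap.curry ⟨_, hF⟩, fun p t => rfl, fun p => ?_⟩
  constructor
  · funext j
    show seqStraight n p.1 ((0 : unitInterval) : ℝ) j = p.1.1 j
    simp only [seqStraight]
    have : min 1 (max 0 ((n + 1 : ℝ) * ((0 : unitInterval) : ℝ) - (j : ℕ))) = 0 := by
      simp [min_eq_right, max_eq_left]
    rw [this]; ring
  · funext j
    show seqStraight n p.1 ((1 : unitInterval) : ℝ) j = p.1.2 j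
    simp only [seqStraight]
    have hj : (j : ℝ) ≤ n := by
      exact_mod_cast Nat.lt_succ_iff.mp j.isLt
    have : min 1 (max 0 ((n + 1 : ℝ) * ((1 : unitInterval) : ℝ) - (j : ℕ))) = 1 := by
      have h1 : (1 : ℝ) ≤ (n + 1 : ℝ) * ((1 : unitInterval) : ℝ) - (j : ℕ) := by
        simp; linarith
      rw [max_eq_right (le_trans zero_le_one h1), min_eq_left h1]
    rw [this]; ring
end

section
/- Every directed path in the directed circle ∂[0,1]² from (0,0) to (1,1) either has image contained in ([0,1]×{0}) ∪ ({1}×[0,1]) or has image contained in ({0}×[0,1]) ∪ ([0,1]×{1}), and not both. -/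
/-- The boundary of the unit cube `[0,1]^{n+1}` in `ℝ^{n+1}`. -/
def cubeBdry (n : ℕ) : Set (Fin (n + 1) → ℝ) :=
  {x | (∀ i, x i ∈ Set.Icc (0 : ℝ) 1) ∧ ∃ i, x i = 0 ∨ x i = 1}

/-- Every directed path in `∂[0,1]²` from `(0,0)` to `(1,1)` either has image
in the lower-right half-square `([0,1]×{0}) ∪ ({1}×[0,1])` or has image in the
upper-left half-square `({0}×[0,1]) ∪ ([0,1]×{1})`, and not both. -/
theorem diPath_circle_halfsquare (γ : C(unitInterval, Fin 2 → ℝ))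
    (hb : ∀ t, γ t ∈ cubeBdry 1) (hm : ∀ i, Monotone fun t => γ t i)
    (h0 : γ 0 = fun _ => 0) (h1 : γ 1 = fun _ => 1) :
    Xor'
      (∀ t, (γ t 0 ∈ Set.Icc (0 : ℝ) 1 ∧ γ t 1 = 0) ∨
            (γ t 0 = 1 ∧ γ t 1 ∈ Set.Icc (0 : ℝ) 1))
      (∀ t, (γ t 0 = 0 ∧ γ t 1 ∈ Set.Icc (0 : ℝ) 1) ∨
            (γ t 0 ∈ Set.Icc (0 : ℝ) 1 ∧ γ t 1 = 1)) := by
  have hI : ∀ t i, γ t i ∈ Set.Icc (0:ℝ) 1 := fun t => (hb t).1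
  have cont : ∀ i : Fin 2, Continuous fun t : unitInterval => γ t i :=
    fun i => (continuous_apply i).comp γ.continuous
  have hbd : ∀ t, γ t 0 = 0 ∨ γ t 0 = 1 ∨ γ t 1 = 0 ∨ γ t 1 = 1 := by
    intro t
    obtain ⟨i, hi⟩ := (hb t).2
    fin_cases i <;> tauto
  have h00 : γ 0 0 = 0 := by rw [h0]
  have h10 : γ 1 0 = 1 := by rw [h1]
  have h01le : (0 : unitInterval) ≤ 1 := by
    rw [Subtype.mk_le_mk]; exact zero_le_one
  have ivt : ∀ (i : Fin 2) (s s' : unitInterval), s ≤ s' → ∀ c : ℝ,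
      c ∈ Set.Icc (γ s i) (γ s' i) → ∃ t, s ≤ t ∧ t ≤ s' ∧ γ t i = c := by
    intro i s s' hss c hc
    set f : ℝ → ℝ := fun x => γ (Set.projIcc 0 1 zero_le_one x) i with hf
    have hfc : Continuous f := (cont i).comp continuous_projIcc
    have hs : f s = γ s i := by simp [hf]
    have hs' : f s' = γ s' i := by simp [hf]
    have hss' : (s : ℝ) ≤ s' := hss
    obtain ⟨x, hx, hxc⟩ := intermediate_value_Icc hss' hfc.continuousOn
      (by rw [hs, hs']; exact hc)
    have hx01 : x ∈ Set.Icc (0:ℝ) 1 := ⟨le_trans s.2.1 hx.1, le_trans hx.2 s'.2.2⟩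
    refine ⟨⟨x, hx01⟩, hx.1, hx.2, ?_⟩
    rw [← hxc, hf]
    show γ ⟨x, hx01⟩ i = γ (Set.projIcc 0 1 zero_le_one x) i
    rw [Set.projIcc_of_mem _ hx01]
  have hnb : ¬ ((∀ t, (γ t 0 ∈ Set.Icc (0 : ℝ) 1 ∧ γ t 1 = 0) ∨
            (γ t 0 = 1 ∧ γ t 1 ∈ Set.Icc (0 : ℝ) 1)) ∧
        (∀ t, (γ t 0 = 0 ∧ γ t 1 ∈ Set.Icc (0 : ℝ) 1) ∨
            (γ t 0 ∈ Set.Icc (0 : ℝ) 1 ∧ γ t 1 = 1))) := by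
    rintro ⟨hP, hQ⟩
    obtain ⟨t, -, -, ht⟩ := ivt 0 0 1 h01le (1/2) (by rw [h00, h10]; norm_num)
    rcases hP t with ⟨-, h⟩ | ⟨h, -⟩ <;> rcases hQ t with ⟨h', -⟩ | ⟨-, h'⟩ <;> linarith
  have hor : (∀ t, (γ t 0 ∈ Set.Icc (0 : ℝ) 1 ∧ γ t 1 = 0) ∨
            (γ t 0 = 1 ∧ γ t 1 ∈ Set.Icc (0 : ℝ) 1)) ∨
        (∀ t, (γ t 0 = 0 ∧ γ t 1 ∈ Set.Icc (0 : ℝ) 1) ∨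
            (γ t 0 ∈ Set.Icc (0 : ℝ) 1 ∧ γ t 1 = 1)) := by
    by_contra h
    push_neg at h
    obtain ⟨hnP, hnQ⟩ := h
    obtain ⟨t₀, ht₀a, ht₀b⟩ := hnP
    obtain ⟨t₁, ht₁a, ht₁b⟩ := hnQ
    have e₀1 : γ t₀ 1 ≠ 0 := ht₀a (hI t₀ 0)
    have e₀0 : γ t₀ 0 ≠ 1 := fun h => ht₀b h (hI t₀ 1)
    have e₁0 : γ t₁ 0 ≠ 0 := fun h => ht₁a h (hI t₁ 1)
    have e₁1 : γ t₁ 1 ≠ 1 := ht₁b (hI t₁ 0)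
    have p₀1 : 0 < γ t₀ 1 := lt_of_le_of_ne (hI t₀ 1).1 (Ne.symm e₀1)
    have p₀0 : γ t₀ 0 < 1 := lt_of_le_of_ne (hI t₀ 0).2 e₀0
    have p₁0 : 0 < γ t₁ 0 := lt_of_le_of_ne (hI t₁ 0).1 (Ne.symm e₁0)
    have p₁1 : γ t₁ 1 < 1 := lt_of_le_of_ne (hI t₁ 1).2 e₁1
    rcases le_total t₀ t₁ with hle | hle
    · have hm1 : γ t₀ 1 ≤ γ t₁ 1 := hm 1 hle
      have hm0 : γ t₀ 0 ≤ γ t₁ 0 := hm 0 hle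
      have g0 : γ t₀ 0 = 0 := by rcases hbd t₀ with h | h | h | h <;> first | exact h | linarith
      have g1 : γ t₁ 0 = 1 := by rcases hbd t₁ with h | h | h | h <;> first | exact h | linarith
      obtain ⟨t, hl, hr, ht⟩ := ivt 0 t₀ t₁ hle (1/2) (by rw [g0, g1]; norm_num)
      have m1 : γ t₀ 1 ≤ γ t 1 := hm 1 hl
      have m2 : γ t 1 ≤ γ t₁ 1 := hm 1 hr
      rcases hbd t with h | h | h | h <;> linarith
    · have hm1 : γ t₁ 1 ≤ γ t₀ 1 := hm 1 hle
      have hm0 : γ t₁ 0 ≤ γ t₀ 0 := hm 0 hle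
      have g0 : γ t₁ 1 = 0 := by rcases hbd t₁ with h | h | h | h <;> first | exact h | linarith
      have g1 : γ t₀ 1 = 1 := by
        rcases hbd t₀ with h | h | h | h <;> first | exact h | linarith
      obtain ⟨t, hl, hr, ht⟩ := ivt 1 t₁ t₀ hle (1/2) (by rw [g0, g1]; norm_num)
      have m1 : γ t₁ 0 ≤ γ t 0 := hm 0 hl
      have m2 : γ t 0 ≤ γ t₀ 0 := hm 0 hr
      rcases hbd t with h | h | h | h <;> linarith
  rcases hor with hP | hQ
  · exact Or.inl ⟨hP, fun hQ => hnb ⟨hP, hQ⟩⟩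
  · exact Or.inr ⟨hQ, fun hP => hnb ⟨hP, hQ⟩⟩
end

section
/- For n ≥ 2 and fixed x_2, ..., x_n ∈ (0,1), the space of directed paths in the directed n-sphere S⃗ⁿ = ∂[0,1]^{n+1} from the point (0, 0, x_2, ..., x_n) to the point (1, 1, x_2, ..., x_n) is homeomorphic to the space of directed paths in the directed circle ∂[0,1]² from (0,0) to (1,1). -/
/-- For `n ≥ 2` and fixed `x_2, …, x_n ∈ (0,1)`, the space of directed paths in
the directed `n`-sphere `∂[0,1]^{n+1}` from `(0,0,x_2,…,x_n)` to
`(1,1,x_2,…,x_n)` is homeomorphic to the space of directed paths in the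
directed circle `∂[0,1]²` from `(0,0)` to `(1,1)` (compact-open topologies). -/
theorem diPath_sphere_slice_homeo (n : ℕ) (hn : 2 ≤ n) (x : Fin (n + 1) → ℝ)
    (hx : ∀ i : Fin (n + 1), 2 ≤ (i : ℕ) → x i ∈ Set.Ioo (0 : ℝ) 1) :
    Nonempty
      ({γ : C(unitInterval, Fin (n + 1) → ℝ) //
          (∀ t, γ t ∈ cubeBdry n) ∧ (∀ i, Monotone fun t => γ t i) ∧
          γ 0 = (fun i : Fin (n + 1) => if (i : ℕ) < 2 then 0 else x i) ∧
          γ 1 = fun i : Fin (n + 1) => if (i : ℕ) < 2 then 1 else x i} ≃ₜ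
        {γ : C(unitInterval, Fin 2 → ℝ) //
          (∀ t, γ t ∈ cubeBdry 1) ∧ (∀ i, Monotone fun t => γ t i) ∧
          γ 0 = (fun _ => 0) ∧ γ 1 = fun _ => 1}) := by
  classical
  set e : Fin 2 → Fin (n + 1) := fun j => ⟨j, by omega⟩ with he
  set f : C(Fin (n + 1) → ℝ, Fin 2 → ℝ) :=
    ⟨fun v j => v (e j), by continuity⟩ with hf
  set g : C(Fin 2 → ℝ, Fin (n + 1) → ℝ) :=
    ⟨fun w i => if h : (i : ℕ) < 2 then w ⟨i, h⟩ else x i, by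
      apply continuous_pi
      intro i
      split_ifs with h
      · exact continuous_apply _
      · exact continuous_const⟩ with hg
  -- coordinates ≥ 2 are constant along directed paths
  have hconst : ∀ γ : C(unitInterval, Fin (n + 1) → ℝ),
      (∀ i, Monotone fun t => γ t i) →
      γ 0 = (fun i : Fin (n + 1) => if (i : ℕ) < 2 then 0 else x i) →
      γ 1 = (fun i : Fin (n + 1) => if (i : ℕ) < 2 then 1 else x i) →
      ∀ (t : unitInterval) (i : Fin (n + 1)), ¬ (i : ℕ) < 2 → γ t i = x i := by
    intro γ hmono h0 h1 t i hi
    have e0 : γ 0 i = x i := by rw [h0]; simp [hi]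
    have e1 : γ 1 i = x i := by rw [h1]; simp [hi]
    have ht0 : (0 : unitInterval) ≤ t := t.2.1
    have ht1 : t ≤ (1 : unitInterval) := t.2.2
    have l1 := hmono i ht0
    have l2 := hmono i ht1
    exact le_antisymm (le_trans l2 (le_of_eq e1)) (le_trans (le_of_eq e0.symm) l1)
  constructor
  refine
    { toFun := fun γ => ⟨f.comp γ.1, ?_, ?_, ?_, ?_⟩
      invFun := fun δ => ⟨g.comp δ.1, ?_, ?_, ?_, ?_⟩
      left_inv := ?_
      right_inv := ?_
      continuous_toFun := ?_
      continuous_invFun := ?_ }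
  · -- boundary forward
    intro t
    obtain ⟨hIcc, i, hi⟩ := γ.2.1 t
    refine ⟨fun j => hIcc (e j), ?_⟩
    by_cases h : (i : ℕ) < 2
    · refine ⟨⟨i, h⟩, ?_⟩
      have : e ⟨i, h⟩ = i := Fin.ext rfl
      simpa [hf, this] using hi
    · exfalso
      have hc := hconst γ.1 γ.2.2.1 γ.2.2.2.1 γ.2.2.2.2 t i h
      have hxi := hx i (by omega)
      rcases hi with hi | hi <;> rw [hc] at hi
      · exact absurd hi.symm (ne_of_lt hxi.1)
      · exact absurd hi (ne_of_lt hxi.2)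
  · intro j s t hst
    exact γ.2.2.1 (e j) hst
  · funext j
    have := congrFun γ.2.2.2.1 (e j)
    simpa [hf, he, j.2] using this
  · funext j
    have := congrFun γ.2.2.2.2 (e j)
    simpa [hf, he, j.2] using this
  · -- boundary backward
    intro t
    obtain ⟨hIcc, j, hj⟩ := δ.2.1 t
    constructor
    · intro i
      simp only [hg, ContinuousMap.comp_apply, ContinuousMap.coe_mk]
      split_ifs with h
      · exact hIcc _
      · have hxi := hx i (by omega)
        exact ⟨le_of_lt hxi.1, le_of_lt hxi.2⟩
    · refine ⟨e j, ?_⟩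
      have h2 : ((e j : Fin (n+1)) : ℕ) < 2 := j.2
      have : (⟨(e j : ℕ), h2⟩ : Fin 2) = j := Fin.ext rfl
      simpa [hg, dif_pos h2, this, (by omega : ((e j : Fin (n+1)) : ℕ) ≤ 1)] using hj
  · intro i s t hst
    simp only [hg, ContinuousMap.comp_apply, ContinuousMap.coe_mk]
    split_ifs with h
    · exact δ.2.2.1 ⟨i, h⟩ hst
    · exact le_refl _
  · funext i
    simp only [hg, ContinuousMap.comp_apply, ContinuousMap.coe_mk]
    split_ifs with h
    · simpa [h] using congrFun δ.2.2.2.1 ⟨i, h⟩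
    · simp [h]
  · funext i
    simp only [hg, ContinuousMap.comp_apply, ContinuousMap.coe_mk]
    split_ifs with h
    · simpa [h] using congrFun δ.2.2.2.2 ⟨i, h⟩
    · simp [h]
  · -- left_inv
    rintro ⟨γ, hb, hmono, h0, h1⟩
    apply Subtype.ext
    ext t i
    simp only [hf, hg, ContinuousMap.comp_apply, ContinuousMap.coe_mk]
    split_ifs with h
    · exact congrArg (γ t) (Fin.ext rfl)
    · exact (hconst γ hmono h0 h1 t i h).symm
  · -- right_inv
    rintro ⟨δ, hb, hmono, h0, h1⟩
    apply Subtype.ext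
    ext t j
    simp only [hf, hg, ContinuousMap.comp_apply, ContinuousMap.coe_mk]
    rw [dif_pos (show ((e  j : Fin (n+1)) : ℕ) < 2 from j.2)]
  · exact ((ContinuousMap.continuous_postcomp f).comp continuous_subtype_val).subtype_mk _
  · exact ((ContinuousMap.continuous_postcomp g).comp continuous_subtype_val).subtype_mk _
end

section
/- There is no continuous global section of the dipath space map for the directed n-sphere: dTC(S⃗ⁿ) > 1 for all n ≥ 1. Equivalently, there is no continuous map σ : Γ → P⃗(S⃗ⁿ) with χ ∘ σ = id, where Γ ⊆ ∂I^{n+1} × ∂I^{n+1} is the directed reachability set. -/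
/-- The reachability set `Γ` of the directed `n`-sphere `∂[0,1]^{n+1}`: pairs
of points joined by a continuous path in `∂I^{n+1}` that is non-decreasing in
each coordinate. -/
def sphereGamma (n : ℕ) : Set ((Fin (n + 1) → ℝ) × (Fin (n + 1) → ℝ)) :=
  {p | ∃ γ : C(unitInterval, Fin (n + 1) → ℝ),
    (∀ t, γ t ∈ cubeBdry n) ∧ (∀ i, Monotone fun t => γ t i) ∧
    γ 0 = p.1 ∧ γ 1 = p.2}

/-- auxiliary vector: `a` at coordinate `i`, `b` at coordinate `j`, `1/2` elsewhere. -/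
noncomputable def dsVec {n : ℕ} (i j : Fin (n + 1)) (a b : ℝ) : Fin (n + 1) → ℝ :=
  fun k => if k = i then a else if k = j then b else 1/2

lemma dsVec_swap {n : ℕ} (i j : Fin (n + 1)) (a : ℝ) : dsVec i j a a = dsVec j i a a := by
  funext k; unfold dsVec; split_ifs <;> rfl

lemma dsVec_mem_gamma {n : ℕ} (i j : Fin (n + 1)) (hij : i ≠ j) (t : ℝ)
    (ht0 : 0 ≤ t) (ht1 : t ≤ 1) :
    (dsVec i j t 0, dsVec i j 1 1) ∈ sphereGamma n := by
  refine ⟨⟨fun s k => if k = i then min 1 (t + 2*(s:ℝ)*(1-t)) else if k = j then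
      max 0 (2*(s:ℝ)-1) else 1/2, ?_⟩, ?_, ?_, ?_, ?_⟩
  · apply continuous_pi
    intro k
    split_ifs <;> fun_prop
  · intro s
    have hs0 : (0:ℝ) ≤ s := s.2.1
    have hs1 : (s:ℝ) ≤ 1 := s.2.2
    constructor
    · intro k
      simp only [ContinuousMap.coe_mk]
      split_ifs
      · constructor
        · have : (0:ℝ) ≤ t + 2*(s:ℝ)*(1-t) := by nlinarith
          simp only [le_min_iff]; exact ⟨by norm_num, this⟩
        · exact min_le_left _ _
      · exact ⟨le_max_left _ _, by simp only [max_le_iff]; exact ⟨by norm_num, by linarith⟩⟩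
      · constructor <;> norm_num
    · by_cases hs : (s:ℝ) ≤ 1/2
      · refine ⟨j, Or.inl ?_⟩
        simp only [ContinuousMap.coe_mk, if_neg (Ne.symm hij), if_pos rfl]
        rw [max_eq_left (by linarith)]
        simp
      · refine ⟨i, Or.inr ?_⟩
        simp only [ContinuousMap.coe_mk, if_pos rfl]
        have : (1:ℝ) ≤ t + 2*(s:ℝ)*(1-t) := by nlinarith
        rw [min_eq_left this]
        simp
  · intro k a b hab
    have hab' : (a:ℝ) ≤ b := hab
    have h1a : (0:ℝ) ≤ a := a.2.1
    simp only [ContinuousMap.coe_mk]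
    split_ifs
    · exact min_le_min le_rfl (by nlinarith)
    · exact max_le_max le_rfl (by linarith)
    · exact le_rfl
  · funext k
    simp only [ContinuousMap.coe_mk, Set.Icc.coe_zero, dsVec]
    split_ifs <;> norm_num
    linarith
  · funext k
    simp only [ContinuousMap.coe_mk, Set.Icc.coe_one, dsVec]
    split_ifs <;> norm_num
    linarith

lemma dsInvariant {n : ℕ} (i j : Fin (n + 1)) (hij : i ≠ j) (t : ℝ) (ht0 : 0 < t) (ht1 : t < 1)
    (γ : C(unitInterval, Fin (n + 1) → ℝ))
    (hb : ∀ s, γ s ∈ cubeBdry n) (hm : ∀ k, Monotone fun s => γ s k)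
    (h0 : γ 0 = dsVec i j t 0) (h1 : γ 1 = dsVec i j 1 1) :
    ∀ s, 1/2 ≤ γ s i ∨ γ s j ≤ 1/2 := by
  -- values at the endpoints
  have e0i : γ 0 i = t := by rw [h0]; simp [dsVec]
  have e0j : γ 0 j = 0 := by rw [h0]; simp [dsVec, Ne.symm hij]
  have e1 : ∀ k, γ 1 k = if k = i ∨ k = j then 1 else 1/2 := by
    intro k; rw [h1]; unfold dsVec; split_ifs with h h' h' <;> simp_all
  have hle0 : ∀ s : unitInterval, (0:unitInterval) ≤ s := fun s => Subtype.coe_le_coe.mp s.2.1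
  have hle1 : ∀ s : unitInterval, s ≤ (1:unitInterval) := fun s => Subtype.coe_le_coe.mp s.2.2
  -- coordinates other than i, j are constantly 1/2
  have hconst : ∀ s, ∀ k, k ≠ i → k ≠ j → γ s k = 1/2 := by
    intro s k hki hkj
    have h₁ : γ 0 k ≤ γ s k := hm k (hle0 s)
    have h₂ : γ s k ≤ γ 1 k := hm k (hle1 s)
    have hz : γ 0 k = 1/2 := by rw [h0]; simp [dsVec, hki, hkj]
    have ho : γ 1 k = 1/2 := by rw [e1 k]; simp [hki, hkj]
    linarith
  -- γ s i ≥ t always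
  have hti : ∀ s, t ≤ γ s i := by
    intro s
    have := hm i (hle0 s)
    simpa [e0i] using this
  -- trichotomy from the boundary condition
  have key : ∀ s, γ s i = 1 ∨ γ s j = 0 ∨ γ s j = 1 := by
    intro s
    obtain ⟨hIcc, k, hk⟩ := hb s
    by_cases hki : k = i
    · subst hki
      rcases hk with hk | hk
      · exact absurd hk (by have := hti s; linarith)
      · exact Or.inl hk
    · by_cases hkj : k = j
      · subst hkj
        rcases hk with hk | hk
        · exact Or.inr (Or.inl hk)
        · exact Or.inr (Or.inr hk)
      · have := hconst s k hki hkj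
        rcases hk with hk | hk <;> (rw [this] at hk; norm_num at hk)
  intro s
  by_contra hcon
  push_neg at hcon
  obtain ⟨hsi, hsj⟩ := hcon
  have hsj1 : γ s j = 1 := by
    rcases key s with h | h | h
    · linarith
    · linarith
    · exact h
  -- intermediate value: some u ≤ s with γ u i + γ u j = 1
  set f : ℝ → ℝ := fun r => γ (Set.projIcc 0 1 zero_le_one r) i + γ (Set.projIcc 0 1 zero_le_one r) j with hf
  have hcont : Continuous f := by
    have hγc : Continuous fun r : ℝ => γ (Set.projIcc 0 1 zero_le_one r) :=
      γ.continuous.comp continuous_projIcc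
    exact ((continuous_apply i).comp hγc).add ((continuous_apply j).comp hγc)
  have hproj0 : Set.projIcc (0:ℝ) 1 zero_le_one 0 = (0:unitInterval) := by
    simp [Set.projIcc_left]
  have hprojs : Set.projIcc (0:ℝ) 1 zero_le_one (s:ℝ) = s := Set.projIcc_val zero_le_one s
  have hmem : (1:ℝ) ∈ Set.Icc (f 0) (f (s:ℝ)) := by
    rw [hf]
    simp only [hproj0, hprojs, e0i, e0j, hsj1]
    constructor <;> [linarith; (have := hti s; linarith)]
  obtain ⟨ur, hur, huv⟩ := intermediate_value_Icc s.2.1 hcont.continuousOn hmem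
  set u : unitInterval := Set.projIcc 0 1 zero_le_one ur with hu
  have hus : u ≤ s := by
    rw [hu, ← hprojs]
    exact Set.monotone_projIcc zero_le_one hur.2
  rw [hf] at huv
  simp only [← hu] at huv
  rcases key u with h | h | h
  · have : γ u i ≤ γ s i := hm i hus
    linarith
  · have hui : γ u i = 1 := by linarith
    have : γ u i ≤ γ s i := hm i hus
    linarith
  · have : γ u i = 0 := by linarith
    have := hti u
    linarith

/-- For `n ≥ 1` there is no continuous global section of the dipath space map
of the directed `n`-sphere: `dTC(S⃗ⁿ) > 1`. -/
theorem no_global_section_directed_sphere (n : ℕ) (hn : 1 ≤ n) :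
    ¬ ∃ sec : C(↥(sphereGamma n),
        {γ : C(unitInterval, Fin (n + 1) → ℝ) //
          (∀ t, γ t ∈ cubeBdry n) ∧ ∀ i, Monotone fun t => γ t i}),
      ∀ p, (sec p).1 0 = p.1.1 ∧ (sec p).1 1 = p.1.2 := by
  rintro ⟨sec, hsec⟩
  have hij : (0 : Fin (n+1)) ≠ 1 := by
    have h1 : (1 : Fin (n+1)).val = 1 := by
      rw [Fin.val_one']; exact Nat.mod_eq_of_lt (by omega)
    intro h
    rw [Fin.ext_iff, h1] at h
    simp at h
  -- clamping function
  set cl : ℝ → ℝ := fun t => max 0 (min t (1/2)) with hcl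
  have hcl0 : ∀ t, 0 ≤ cl t := fun t => le_max_left _ _
  have hcl1 : ∀ t, cl t ≤ 1 :=
    fun t => max_le (by norm_num) (le_trans (min_le_right _ _) (by norm_num))
  have hclcont : Continuous cl := by rw [hcl]; fun_prop
  have hcl_eq : ∀ t ∈ Set.Ioc (0:ℝ) (1/2), cl t = t := by
    rintro t ⟨ht0, ht1⟩
    rw [hcl]
    simp only [min_eq_left ht1, max_eq_right ht0.le]
  have hcl_zero : cl 0 = 0 := by rw [hcl]; norm_num
  have hmemP : ∀ (i j : Fin (n+1)), i ≠ j → ∀ t : ℝ,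
      (dsVec i j (cl t) 0, dsVec i j 1 1) ∈ sphereGamma n :=
    fun i j h t => dsVec_mem_gamma i j h _ (hcl0 t) (hcl1 t)
  -- the key limit fact, for any pair of distinct coordinates
  have main : ∀ (i j : Fin (n+1)) (h : i ≠ j) (s : unitInterval),
      1/2 ≤ (sec ⟨(dsVec i j 0 0, dsVec i j 1 1),
          dsVec_mem_gamma i j h 0 le_rfl zero_le_one⟩).1 s i ∨
      (sec ⟨(dsVec i j 0 0, dsVec i j 1 1),
          dsVec_mem_gamma i j h 0 le_rfl zero_le_one⟩).1 s j ≤ 1/2 := by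
    intro i j h s
    set Q : ℝ → ↥(sphereGamma n) := fun t => ⟨(dsVec i j (cl t) 0, dsVec i j 1 1), hmemP i j h t⟩
      with hQ
    have hQc : Continuous Q := by
      apply Continuous.subtype_mk
      apply Continuous.prodMk
      · apply continuous_pi
        intro k
        unfold dsVec
        split_ifs <;> fun_prop
      · exact continuous_const
    set G : ℝ → (Fin (n+1) → ℝ) := fun t => (sec (Q t)).1 s with hG
    have hGc : Continuous G := by
      rw [hG]
      exact (ContinuousEvalConst.continuous_eval_const s).comp
        (continuous_subtype_val.comp (sec.continuous.comp hQc))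
    have hC : IsClosed {x : Fin (n+1) → ℝ | 1/2 ≤ x i ∨ x j ≤ 1/2} :=
      (isClosed_le continuous_const (continuous_apply i)).union
        (isClosed_le (continuous_apply j) continuous_const)
    have hev : ∀ᶠ t in nhdsWithin (0:ℝ) (Set.Ioi 0),
        G t ∈ {x : Fin (n+1) → ℝ | 1/2 ≤ x i ∨ x j ≤ 1/2} := by
      filter_upwards [Ioc_mem_nhdsGT_of_mem
        (⟨le_rfl, by norm_num⟩ : (0:ℝ) ∈ Set.Ico 0 (1/2))] with t ht
      have hclt : cl t = t := hcl_eq t ht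
      have h0 : (sec (Q t)).1 0 = dsVec i j (cl t) 0 := (hsec (Q t)).1
      have h1 : (sec (Q t)).1 1 = dsVec i j 1 1 := (hsec (Q t)).2
      exact dsInvariant i j h (cl t) (by rw [hclt]; exact ht.1)
        (by rw [hclt]; linarith [ht.2]) _ (sec (Q t)).2.1 (sec (Q t)).2.2 h0 h1 s
    have hG0 : G 0 ∈ {x : Fin (n+1) → ℝ | 1/2 ≤ x i ∨ x j ≤ 1/2} :=
      hC.mem_of_tendsto ((hGc.tendsto 0).mono_left nhdsWithin_le_nhds) hev
    have hQ0 : Q 0 = ⟨(dsVec i j 0 0, dsVec i j 1 1),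
        dsVec_mem_gamma i j h 0 le_rfl zero_le_one⟩ := by
      apply Subtype.ext
      rw [hQ]
      simp only [hcl_zero]
    simp only [hG, hQ0] at hG0
    exact hG0
  -- the limiting path
  set p01 : ↥(sphereGamma n) := ⟨(dsVec 0 1 0 0, dsVec 0 1 1 1),
    dsVec_mem_gamma 0 1 hij 0 le_rfl zero_le_one⟩ with hp01
  set γ0 : C(unitInterval, Fin (n+1) → ℝ) := (sec p01).1 with hγ0
  have hb := (sec p01).2.1
  have hm := (sec p01).2.2
  have h0 : γ0 0 = dsVec 0 1 0 0 := (hsec p01).1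
  have h1 : γ0 1 = dsVec 0 1 1 1 := (hsec p01).2
  -- find s* with coordinate sum 1 via IVT
  set f : ℝ → ℝ := fun r => γ0 (Set.projIcc 0 1 zero_le_one r) 0 +
      γ0 (Set.projIcc 0 1 zero_le_one r) 1 with hf
  have hfc : Continuous f := by
    have hγc : Continuous fun r : ℝ => γ0 (Set.projIcc 0 1 zero_le_one r) :=
      γ0.continuous.comp continuous_projIcc
    exact ((continuous_apply 0).comp hγc).add ((continuous_apply 1).comp hγc)
  have e0 : Set.projIcc (0:ℝ) 1 zero_le_one 0 = (0:unitInterval) := by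
    apply Subtype.ext; simp [Set.projIcc]
  have e1 : Set.projIcc (0:ℝ) 1 zero_le_one 1 = (1:unitInterval) := by
    apply Subtype.ext; simp [Set.projIcc]
  have hmem : (1:ℝ) ∈ Set.Icc (f 0) (f 1) := by
    rw [hf]
    simp only [e0, e1]
    rw [h0, h1]
    unfold dsVec
    simp only [if_pos rfl, if_neg (Ne.symm hij)]
    norm_num
  obtain ⟨ur, _, hur⟩ := intermediate_value_Icc (zero_le_one) hfc.continuousOn hmem
  set s : unitInterval := Set.projIcc 0 1 zero_le_one ur with hs
  rw [hf] at hur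
  simp only [← hs] at hur
  -- the two invariants at s
  have hA := main 0 1 hij s
  have hB := main 1 0 (Ne.symm hij) s
  have hpe : (⟨(dsVec 1 0 0 0, dsVec 1 0 1 1),
      dsVec_mem_gamma 1 0 (Ne.symm hij) 0 le_rfl zero_le_one⟩ : ↥(sphereGamma n)) = p01 := by
    apply Subtype.ext
    rw [hp01]
    exact Prod.ext (dsVec_swap 1 0 0) (dsVec_swap 1 0 1)
  rw [hpe] at hB
  rw [← hp01] at hA
  rw [← hγ0] at hA hB
  have ha : γ0 s 0 = 1/2 := by rcases hA with h' | h' <;> rcases hB with h'' | h'' <;> linarith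
  have hb' : γ0 s 1 = 1/2 := by rcases hA with h' | h' <;> rcases hB with h'' | h'' <;> linarith
  -- other coordinates are 1/2
  have hconst : ∀ k : Fin (n+1), k ≠ 0 → k ≠ 1 → γ0 s k = 1/2 := by
    intro k hk0 hk1
    have hl : γ0 0 k ≤ γ0 s k := hm k (Subtype.coe_le_coe.mp s.2.1)
    have hr : γ0 s k ≤ γ0 1 k := hm k (Subtype.coe_le_coe.mp s.2.2)
    rw [h0] at hl; rw [h1] at hr
    unfold dsVec at hl hr
    rw [if_neg hk0, if_neg hk1] at hl hr
    linarith
  -- contradiction with the boundary condition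
  obtain ⟨_, k, hk⟩ := hb s
  have : γ0 s k = 1/2 := by
    by_cases hk0 : k = 0
    · rw [hk0]; exact ha
    · by_cases hk1 : k = 1
      · rw [hk1]; exact hb'
      · exact hconst k hk0 hk1
  rw [this] at hk
  rcases hk with hk | hk <;> norm_num at hk
end

section
/- Let Γ ⊆ ∂I^{n+1} × ∂I^{n+1} be the reachability set of the directed n-sphere. Let U₁ be the set of pairs (x,y) ∈ Γ for which there exists j ∈ {0,...,n} with x_j < y_j, y_i ∈ (0,1) for all i < j, and x_i ∈ (0,1) for all i > j. Let U₂ be the set of pairs (x,y) ∈ Γ for which there exists k with x_k < y_k, x_i ∈ (0,1) for all i < k, and y_i ∈ (0,1) for all i > k. Then U₁ ∩ U₂ = ∅. -/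
/-- With `U₁` the set of pairs `(x,y) ∈ Γ` with some `j` such that `x_j < y_j`,
`y_i ∈ (0,1)` for `i < j` and `x_i ∈ (0,1)` for `i > j`, and `U₂` defined with
the roles of `x` and `y` in the side conditions swapped, one has `U₁ ∩ U₂ = ∅`. -/
theorem sphere_U1_inter_U2_empty (n : ℕ) :
    {p : (Fin (n + 1) → ℝ) × (Fin (n + 1) → ℝ) | p ∈ sphereGamma n ∧
        ∃ j : Fin (n + 1), p.1 j < p.2 j ∧
          (∀ i, i < j → p.2 i ∈ Set.Ioo (0 : ℝ) 1) ∧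
          ∀ i, j < i → p.1 i ∈ Set.Ioo (0 : ℝ) 1} ∩
      {p : (Fin (n + 1) → ℝ) × (Fin (n + 1) → ℝ) | p ∈ sphereGamma n ∧
        ∃ k : Fin (n + 1), p.1 k < p.2 k ∧
          (∀ i, i < k → p.1 i ∈ Set.Ioo (0 : ℝ) 1) ∧
          ∀ i, k < i → p.2 i ∈ Set.Ioo (0 : ℝ) 1} = ∅ := by
  ext p
  simp only [Set.mem_inter_iff, Set.mem_setOf_eq, Set.mem_empty_iff_false, iff_false]
  rintro ⟨⟨⟨γ, hbd, hmono, h0, h1⟩, j, hj, hyj, hxj⟩, ⟨-, k, hk, hxk, hyk⟩⟩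
  have h01 : (0 : unitInterval) ≤ 1 := by
    rw [← Subtype.coe_le_coe]; norm_num
  have hle : ∀ i, p.1 i ≤ p.2 i := by
    intro i
    have := hmono i h01
    simpa [h0, h1] using this
  rcases lt_trichotomy j k with hjk | hjk | hjk
  · -- all coordinates of x are in (0,1), contradicting x ∈ boundary
    have hx : p.1 ∈ cubeBdry n := by rw [← h0]; exact hbd 0
    obtain ⟨i, hi⟩ := hx.2
    have : p.1 i ∈ Set.Ioo (0 : ℝ) 1 := by
      rcases lt_trichotomy i j with h | h | h
      · exact hxk i (h.trans hjk)
      · exact h ▸ hxk j hjk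
      · exact hxj i h
    rcases hi with hi | hi <;> rw [hi] at this <;> simp at this
  · -- j = k : the hard case
    subst hjk
    -- all coordinates other than j of both x and y are in (0,1)
    have hoth : ∀ i, i ≠ j → p.1 i ∈ Set.Ioo (0 : ℝ) 1 ∧ p.2 i ∈ Set.Ioo (0 : ℝ) 1 := by
      intro i hi
      rcases lt_or_gt_of_ne hi with h | h
      · exact ⟨hxk i h, hyj i h⟩
      · exact ⟨hxj i h, hyk i h⟩
    -- x j = 0 and y j = 1
    have hx : p.1 ∈ cubeBdry n := by rw [← h0]; exact hbd 0
    have hy : p.2 ∈ cubeBdry n := by rw [← h1]; exact hbd 1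
    have hxj0 : p.1 j = 0 := by
      obtain ⟨i, hi⟩ := hx.2
      by_cases hij : i = j
      · subst hij
        rcases hi with hi | hi
        · exact hi
        · exact absurd hi (by linarith [(hy.1 i).2])
      · rcases hi with hi | hi <;>
          simpa [hi] using (hoth i hij).1
    have hyj1 : p.2 j = 1 := by
      obtain ⟨i, hi⟩ := hy.2
      by_cases hij : i = j
      · subst hij
        rcases hi with hi | hi
        · exact absurd hi (by linarith [(hx.1 i).1])
        · exact hi
      · rcases hi with hi | hi <;>
          simpa [hi] using (hoth i hij).2
    -- along the path, every coordinate other than j stays in (0,1)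
    have hpath : ∀ t : unitInterval, γ t j = 0 ∨ γ t j = 1 := by
      intro t
      obtain ⟨i, hi⟩ := (hbd t).2
      by_cases hij : i = j
      · subst hij; exact hi
      · exfalso
        have hlo : p.1 i ≤ γ t i := by
          have := hmono i (show (0:unitInterval) ≤ t from t.2.1)
          simpa [h0] using this
        have hhi : γ t i ≤ p.2 i := by
          have := hmono i (show t ≤ (1:unitInterval) by
            rw [← Subtype.coe_le_coe]; exact t.2.2)
          simpa [h1] using this
        obtain ⟨⟨hx1, _⟩, ⟨_, hy2⟩⟩ := hoth i hij
        rcases hi with hi | hi <;> rw [hi] at hlo hhi <;> linarith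
    -- intermediate value theorem on t ↦ γ t j gives a contradiction
    have hcont : Continuous fun t : unitInterval => γ t j :=
      (continuous_apply j).comp γ.continuous
    have hiv := intermediate_value_univ (0 : unitInterval) (1 : unitInterval) hcont
    have hmem : (1/2 : ℝ) ∈ Set.Icc (γ 0 j) (γ 1 j) := by
      rw [h0, h1, hxj0, hyj1]; norm_num
    obtain ⟨t, ht⟩ := hiv hmem
    have ht' : γ t j = 1/2 := ht
    rcases hpath t with h | h <;> rw [h] at ht' <;> norm_num at ht'
  · -- all coordinates of y are in (0,1), contradicting y ∈ boundary
    have hy : p.2 ∈ cubeBdry n := by rw [← h1]; exact hbd 1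
    obtain ⟨i, hi⟩ := hy.2
    have : p.2 i ∈ Set.Ioo (0 : ℝ) 1 := by
      rcases lt_trichotomy i k with h | h | h
      · exact hyj i (h.trans hjk)
      · exact h ▸ hyj k hjk
      · exact hyk i h
    rcases hi with hi | hi <;> rw [hi] at this <;> simp at this
end

section
/- With U₁, U₂ ⊆ Γ as above and B_i = Γ \ U_i, one has B₁ ∪ B₂ = Γ; i.e., for every (x,y) in the reachability set Γ of the directed n-sphere, at least one of the two sequential-straightening paths (increasing coordinates in order 0,1,...,n, or in order n, n−1,...,0) from x to y stays inside ∂I^{n+1}. -/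
/-- The sequential straightening path increasing the coordinates in the reverse
order `n, n-1, …, 0`. -/
noncomputable def seqStraightRev (n : ℕ) (p : (Fin (n + 1) → ℝ) × (Fin (n + 1) → ℝ))
    (t : ℝ) : Fin (n + 1) → ℝ :=
  fun j => p.1 j + min 1 (max 0 ((n + 1) * t - ((n : ℝ) - (j : ℕ)))) * (p.2 j - p.1 j)

lemma clamp_mem (a : ℝ) : min 1 (max 0 a) ∈ Set.Icc (0:ℝ) 1 :=
  ⟨le_min zero_le_one (le_max_left 0 a), min_le_left 1 _⟩

lemma interp_mem_Icc {a b s : ℝ} (hab : a ≤ b) (hs : s ∈ Set.Icc (0:ℝ) 1) :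
    a + s * (b - a) ∈ Set.Icc a b := by
  constructor <;> nlinarith [hs.1, hs.2]

lemma not_bdry_Ioo {n : ℕ} {z : Fin (n+1) → ℝ} (hIcc : ∀ i, z i ∈ Set.Icc (0:ℝ) 1)
    (hz : z ∉ cubeBdry n) : ∀ i, z i ∈ Set.Ioo (0:ℝ) 1 := by
  intro i
  have h1 : ¬ ∃ i, z i = 0 ∨ z i = 1 := fun h => hz ⟨hIcc, h⟩
  push_neg at h1
  obtain ⟨h0, hone⟩ := h1 i
  exact ⟨(hIcc i).1.lt_of_ne (Ne.symm h0), (hIcc i).2.lt_of_ne hone⟩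

lemma seq_fail (n : ℕ) (x y : Fin (n+1) → ℝ) (hxy : ∀ i, x i ≤ y i)
    (u : ℝ)
    (h : ∀ i : Fin (n+1), x i + min 1 (max 0 (u - ((i:ℕ):ℝ))) * (y i - x i) ∈ Set.Ioo (0:ℝ) 1) :
    ∃ j : Fin (n+1), (∀ i, i < j → y i ∈ Set.Ioo (0:ℝ) 1) ∧
      (∀ i, j < i → x i ∈ Set.Ioo (0:ℝ) 1) ∧
      ∃ v, x j ≤ v ∧ v ≤ y j ∧ v ∈ Set.Ioo (0:ℝ) 1 := by
  set m : ℕ := if u ≤ 0 then 0 else min ⌊u⌋₊ n with hm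
  have hmn : m ≤ n := by by_cases h0 : u ≤ 0 <;> simp [hm, h0]
  refine ⟨⟨m, Nat.lt_succ_of_le hmn⟩, ?_, ?_, ?_⟩
  · intro i hi
    have hiv : (i : ℕ) < m := hi
    have hu0 : ¬ u ≤ 0 := by
      intro h0; rw [hm, if_pos h0] at hiv; omega
    have hfl : (i:ℕ) + 1 ≤ ⌊u⌋₊ := by
      rw [hm, if_neg hu0] at hiv; omega
    have hu : ((i:ℕ) : ℝ) + 1 ≤ u := by
      calc ((i:ℕ):ℝ) + 1 = (((i:ℕ)+1 : ℕ) : ℝ) := by push_cast; ring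
      _ ≤ (⌊u⌋₊ : ℝ) := by exact_mod_cast hfl
      _ ≤ u := Nat.floor_le (not_le.mp hu0).le
    have hs : min 1 (max 0 (u - ((i:ℕ):ℝ))) = 1 := by
      rw [max_eq_right (by linarith), min_eq_left (by linarith)]
    have hv := h i
    rw [hs] at hv
    have heq : x i + 1 * (y i - x i) = y i := by ring
    rwa [heq] at hv
  · intro i hi
    have hiv : m < (i:ℕ) := hi
    have hui : u ≤ ((i:ℕ):ℝ) := by
      by_cases h0 : u ≤ 0
      · have : (0:ℝ) ≤ ((i:ℕ):ℝ) := Nat.cast_nonneg _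
        linarith
      · rw [hm, if_neg h0] at hiv
        have hin : (i:ℕ) ≤ n := Nat.lt_succ_iff.mp i.isLt
        have hfl : ⌊u⌋₊ + 1 ≤ (i:ℕ) := by omega
        have h1 : ((⌊u⌋₊ : ℝ) + 1) ≤ ((i:ℕ):ℝ) := by exact_mod_cast hfl
        have h2 := Nat.lt_floor_add_one u
        linarith
    have hs : min 1 (max 0 (u - ((i:ℕ):ℝ))) = 0 := by
      rw [max_eq_left (by linarith), min_eq_right zero_le_one]
    have hv := h i
    rw [hs] at hv
    have heq : x i + 0 * (y i - x i) = x i := by ring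
    rwa [heq] at hv
  · refine ⟨_, (interp_mem_Icc (hxy _) (clamp_mem _)).1,
      (interp_mem_Icc (hxy _) (clamp_mem _)).2, h ⟨m, Nat.lt_succ_of_le hmn⟩⟩

/-- For every pair in the reachability set of the directed `n`-sphere, at least
one of the two sequential straightening paths stays in `∂I^{n+1}`;
equivalently `B₁ ∪ B₂ = Γ`. -/
theorem sphere_B1_union_B2 (n : ℕ) (p : (Fin (n + 1) → ℝ) × (Fin (n + 1) → ℝ))
    (hp : p ∈ sphereGamma n) :
    (∀ t ∈ Set.Icc (0 : ℝ) 1, seqStraight n p t ∈ cubeBdry n) ∨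
    (∀ t ∈ Set.Icc (0 : ℝ) 1, seqStraightRev n p t ∈ cubeBdry n) := by
  obtain ⟨γ, hbdry, hmono, hx0, hy1⟩ := hp
  set x := p.1 with hxdef
  set y := p.2 with hydef
  have hxy : ∀ i, x i ≤ y i := by
    intro i
    have h01 : (0 : unitInterval) ≤ 1 := unitInterval.nonneg'
    have := hmono i h01
    simpa [hx0, hy1] using this
  have hxb : x ∈ cubeBdry n := by rw [← hx0]; exact hbdry 0
  have hyb : y ∈ cubeBdry n := by rw [← hy1]; exact hbdry 1
  by_contra hcon
  push_neg at hcon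
  obtain ⟨⟨t₁, ht₁, hf₁⟩, ⟨t₂, ht₂, hf₂⟩⟩ := hcon
  -- both failure points are fully interior
  have hIcc1 : ∀ i, seqStraight n p t₁ i ∈ Set.Icc (0:ℝ) 1 := by
    intro i
    have h := interp_mem_Icc (hxy i) (clamp_mem ((n+1) * t₁ - ((i:ℕ):ℝ)))
    exact ⟨le_trans (hxb.1 i).1 h.1, le_trans h.2 (hyb.1 i).2⟩
  have hIcc2 : ∀ i, seqStraightRev n p t₂ i ∈ Set.Icc (0:ℝ) 1 := by
    intro i
    have h := interp_mem_Icc (hxy i) (clamp_mem ((n+1) * t₂ - ((n:ℝ) - ((i:ℕ):ℝ))))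
    exact ⟨le_trans (hxb.1 i).1 h.1, le_trans h.2 (hyb.1 i).2⟩
  have hI1 : ∀ i, seqStraight n p t₁ i ∈ Set.Ioo (0:ℝ) 1 := not_bdry_Ioo hIcc1 hf₁
  have hI2 : ∀ i, seqStraightRev n p t₂ i ∈ Set.Ioo (0:ℝ) 1 := not_bdry_Ioo hIcc2 hf₂
  -- apply key lemma to first path
  obtain ⟨j, hy1j, hx1j, v, hxv, hvy, hvI⟩ :=
    seq_fail n x y hxy ((n+1) * t₁) (fun i => hI1 i)
  -- apply key lemma to reversed second path
  have hrv : ∀ i : Fin (n+1), (n:ℝ) - (((Fin.rev i : Fin (n+1)) : ℕ) : ℝ) = ((i:ℕ):ℝ) := by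
    intro i
    have h1 : ((Fin.rev i : Fin (n+1)) : ℕ) = n - (i:ℕ) := by
      rw [Fin.val_rev]; omega
    rw [h1, Nat.cast_sub (Nat.lt_succ_iff.mp i.isLt)]
    ring
  have hI2' : ∀ i : Fin (n+1),
      x (Fin.rev i) + min 1 (max 0 ((n+1) * t₂ - ((i:ℕ):ℝ))) *
        (y (Fin.rev i) - x (Fin.rev i)) ∈ Set.Ioo (0:ℝ) 1 := by
    intro i
    have := hI2 (Fin.rev i)
    rw [show seqStraightRev n p t₂ (Fin.rev i) =
      x (Fin.rev i) + min 1 (max 0 ((n+1) * t₂ - ((n:ℝ) - (((Fin.rev i : Fin (n+1)):ℕ):ℝ)))) *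
        (y (Fin.rev i) - x (Fin.rev i)) from rfl, hrv i] at this
    exact this
  obtain ⟨j₂, hx2j, hy2j, w, hxw, hwy, hwI⟩ :=
    seq_fail n (fun i => x (Fin.rev i)) (fun i => y (Fin.rev i))
      (fun i => hxy (Fin.rev i)) ((n+1) * t₂) hI2'
  set k : Fin (n+1) := Fin.rev j₂ with hk
  -- translate the second set of conditions
  have hx2 : ∀ i, i < k → x i ∈ Set.Ioo (0:ℝ) 1 := by
    intro i hi
    have hlt : j₂ < Fin.rev i := by
      rw [hk] at hi
      have := Fin.rev_lt_rev.mpr hi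
      simpa using this
    have h := hy2j (Fin.rev i) hlt
    simpa using h
  have hy2 : ∀ i, k < i → y i ∈ Set.Ioo (0:ℝ) 1 := by
    intro i hi
    have hlt : Fin.rev i < j₂ := by
      rw [hk] at hi
      have := Fin.rev_lt_rev.mpr hi
      simpa using this
    have h := hx2j (Fin.rev i) hlt
    simpa using h
  have hkj : x k ≤ w ∧ w ≤ y k := by
    constructor
    · simpa [hk] using hxw
    · simpa [hk] using hwy
  -- trichotomy
  rcases lt_trichotomy j k with hjk | hjk | hjk
  · -- x is interior: contradiction with hxb
    obtain ⟨i, hi⟩ := hxb.2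
    have hiI : x i ∈ Set.Ioo (0:ℝ) 1 := by
      rcases lt_or_ge i k with h | h
      · exact hx2 i h
      · exact hx1j i (lt_of_lt_of_le hjk h)
    rcases hi with h0 | h1
    · exact absurd h0 (ne_of_gt hiI.1)
    · exact absurd h1 (ne_of_lt hiI.2)
  · -- j = k : x j = 0, y j = 1, IVT contradiction
    subst hjk
    have hxj : x k = 0 := by
      obtain ⟨i, hi⟩ := hxb.2
      have hij : i = k := by
        by_contra hne
        rcases lt_or_gt_of_ne hne with h | h
        · have := hx2 i h
          rcases hi with h0 | h1
          · exact absurd h0 (ne_of_gt this.1)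
          · exact absurd h1 (ne_of_lt this.2)
        · have := hx1j i h
          rcases hi with h0 | h1
          · exact absurd h0 (ne_of_gt this.1)
          · exact absurd h1 (ne_of_lt this.2)
      subst hij
      rcases hi with h0 | h1
      · exact h0
      · exfalso; rw [h1] at hxv; linarith [hvI.2]
    have hyj : y k = 1 := by
      obtain ⟨i, hi⟩ := hyb.2
      have hij : i = k := by
        by_contra hne
        rcases lt_or_gt_of_ne hne with h | h
        · have := hy1j i h
          rcases hi with h0 | h1
          · exact absurd h0 (ne_of_gt this.1)
          · exact absurd h1 (ne_of_lt this.2)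
        · have := hy2 i h
          rcases hi with h0 | h1
          · exact absurd h0 (ne_of_gt this.1)
          · exact absurd h1 (ne_of_lt this.2)
      subst hij
      rcases hi with h0 | h1
      · exfalso; rw [h0] at hvy; linarith [hvI.1]
      · exact h1
    -- IVT on the path γ
    set g : ℝ → ℝ := fun t => γ (Set.projIcc 0 1 zero_le_one t) k with hg
    have hgc : Continuous g :=
      (continuous_apply k).comp (γ.continuous.comp continuous_projIcc)
    have hg0 : g 0 = 0 := by
      have : Set.projIcc (0:ℝ) 1 zero_le_one 0 = (0 : unitInterval) := by
        apply Subtype.ext; simp [Set.projIcc]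
      rw [hg]; simp only; rw [this, hx0]; exact hxj
    have hg1 : g 1 = 1 := by
      have : Set.projIcc (0:ℝ) 1 zero_le_one 1 = (1 : unitInterval) := by
        apply Subtype.ext; simp [Set.projIcc]
      rw [hg]; simp only; rw [this, hy1]; exact hyj
    have hsub := intermediate_value_Icc (zero_le_one) hgc.continuousOn
    have hhalf : (1/2 : ℝ) ∈ Set.Icc (g 0) (g 1) := by
      rw [hg0, hg1]; norm_num
    obtain ⟨t, _, hgt⟩ := hsub hhalf
    set s : unitInterval := Set.projIcc 0 1 zero_le_one t with hs
    have hsc : γ s k = 1/2 := hgt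
    have hsb := hbdry s
    obtain ⟨i, hi⟩ := hsb.2
    have h0s : (0:unitInterval) ≤ s := unitInterval.nonneg'
    have hs1 : s ≤ (1:unitInterval) := unitInterval.le_one'
    by_cases hij : i = k
    · subst hij
      rw [hsc] at hi
      rcases hi with h | h <;> norm_num at h
    · have hxi : x i ∈ Set.Ioo (0:ℝ) 1 := by
        rcases lt_or_gt_of_ne hij with h | h
        · exact hx2 i h
        · exact hx1j i h
      have hyi : y i ∈ Set.Ioo (0:ℝ) 1 := by
        rcases lt_or_gt_of_ne hij with h | h
        · exact hy1j i h
        · exact hy2 i h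
      have hlo : x i ≤ γ s i := by
        have := hmono i h0s
        simpa [hx0] using this
      have hhi : γ s i ≤ y i := by
        have := hmono i hs1
        simpa [hy1] using this
      rcases hi with h0 | h1
      · rw [h0] at hlo; linarith [hxi.1]
      · rw [h1] at hhi; linarith [hyi.2]
  · -- y is interior: contradiction with hyb
    obtain ⟨i, hi⟩ := hyb.2
    have hiI : y i ∈ Set.Ioo (0:ℝ) 1 := by
      rcases lt_or_ge i j with h | h
      · exact hy1j i h
      · exact hy2 i (lt_of_lt_of_le hjk h)
    rcases hi with h0 | h1
    · exact absurd h0 (ne_of_gt hiI.1)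
    · exact absurd h1 (ne_of_lt hiI.2)
end

section
/- If (x,y) ∈ Γ (the reachability set of the directed n-sphere ∂I^{n+1}) and the sequential-straightening path σ̃₁(x,y) (increasing coordinates in order 0,...,n) has image contained in ∂I^{n+1}, then σ̃₁(x,y) is a directed path in the directed n-sphere from x to y; moreover the assignment (x,y) ↦ σ̃₁(x,y) is continuous on this subset with respect to the compact-open topology on the path space. -/
/-- On `B₁ = {(x,y) ∈ Γ | σ̃₁(x,y) has image in ∂I^{n+1}}`, the path
`σ̃₁(x,y)` is a directed path in the directed `n`-sphere from `x` to `y`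
(non-decreasing in each coordinate, with the right endpoints), and the
assignment `(x,y) ↦ σ̃₁(x,y)` is continuous into the path space with the
compact-open topology. -/
theorem seqStraight_dipath_and_continuous_on_B1 (n : ℕ) :
    (∀ p ∈ sphereGamma n, (∀ t ∈ Set.Icc (0 : ℝ) 1, seqStraight n p t ∈ cubeBdry n) →
      (∀ i, MonotoneOn (fun t => seqStraight n p t i) (Set.Icc (0 : ℝ) 1)) ∧
      seqStraight n p 0 = p.1 ∧ seqStraight n p 1 = p.2) ∧
    ∃ sec : C({p : (Fin (n + 1) → ℝ) × (Fin (n + 1) → ℝ) //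
          p ∈ sphereGamma n ∧ ∀ t ∈ Set.Icc (0 : ℝ) 1, seqStraight n p t ∈ cubeBdry n},
        C(unitInterval, Fin (n + 1) → ℝ)),
      ∀ p t, sec p t = seqStraight n p.1 (t : ℝ) := by
  constructor
  · rintro ⟨x, y⟩ ⟨γ, hbd, hmono, h0, h1⟩ _
    have hxy : ∀ j, x j ≤ y j := by
      intro j
      have h := hmono j (show (0 : unitInterval) ≤ 1 from unitInterval.nonneg')
      simpa [h0, h1] using h
    refine ⟨?_, ?_, ?_⟩
    · intro i s hs t ht hst
      simp only [seqStraight]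
      have hd : (0 : ℝ) ≤ y i - x i := sub_nonneg.mpr (hxy i)
      have hc : ((n : ℝ) + 1) * s ≤ ((n : ℝ) + 1) * t := by
        have hn : (0 : ℝ) ≤ (n : ℝ) + 1 := by positivity
        nlinarith
      gcongr
    · funext j
      simp only [seqStraight]
      have : max 0 (((n : ℝ) + 1) * 0 - (j : ℕ)) = 0 := by
        apply max_eq_left
        simp
      simp [this]
    · funext j
      simp only [seqStraight]
      have hj : (j : ℝ) ≤ (n : ℝ) := by
        exact_mod_cast Nat.le_of_lt_succ j.isLt
      have h1 : (1 : ℝ) ≤ ((n : ℝ) + 1) * 1 - (j : ℕ) := by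
        linarith
      have hmax : max 0 (((n : ℝ) + 1) * 1 - (j : ℕ)) = ((n : ℝ) + 1) * 1 - (j : ℕ) := by
        apply max_eq_right; linarith
      rw [hmax, min_eq_left h1]
      ring
  · refine ⟨ContinuousMap.curry ⟨fun q => seqStraight n q.1.1 (q.2 : ℝ), ?_⟩, fun p t => rfl⟩
    unfold seqStraight
    fun_prop
end

section
/- The directed topological complexity of the directed n-sphere equals 2 for every n ≥ 1: the reachability set Γ of S⃗ⁿ cannot admit a continuous global section of the dipath space map, but Γ can be partitioned into two disjoint ENRs A₁, A₂, each admitting a continuous map σ_i : A_i → P⃗(S⃗ⁿ) with χ ∘ σ_i equal to the inclusion A_i ↪ Γ. -/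
/-- The space of directed paths of the directed `n`-sphere `∂[0,1]^{n+1}`
(continuous paths in `∂I^{n+1}` non-decreasing in every coordinate), with the
compact-open topology. -/
abbrev SphereDiPath (n : ℕ) : Type :=
  {γ : C(unitInterval, Fin (n + 1) → ℝ) //
    (∀ t, γ t ∈ cubeBdry n) ∧ ∀ i, Monotone fun t => γ t i}

/-- `A` is a Euclidean neighbourhood retract (in its ambient space): it is a
retract of an open neighbourhood. -/
def IsENR {Y : Type*} [TopologicalSpace Y] (A : Set Y) : Prop :=
  ∃ U : Set Y, IsOpen U ∧ A ⊆ U ∧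
    ∃ r : C(U, Y), (∀ u : U, r u ∈ A) ∧ ∀ u : U, (u : Y) ∈ A → r u = u


namespace DTCAux

open Set Metric

noncomputable section

/-! ### clamp to [0,1] -/

def cl (v : ℝ) : ℝ := max 0 (min 1 v)

lemma cl_mem (v : ℝ) : cl v ∈ Icc (0:ℝ) 1 :=
  ⟨le_max_left _ _, max_le zero_le_one (min_le_left _ _)⟩

lemma cl_of_nonpos {v : ℝ} (h : v ≤ 0) : cl v = 0 := by
  unfold cl; rw [min_eq_right (h.trans zero_le_one), max_eq_left h]

lemma cl_of_one_le {v : ℝ} (h : 1 ≤ v) : cl v = 1 := by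
  unfold cl; rw [min_eq_left h, max_eq_right zero_le_one]

lemma cl_of_mem {v : ℝ} (h : v ∈ Icc (0:ℝ) 1) : cl v = v := by
  unfold cl; rw [min_eq_right h.2, max_eq_right h.1]

lemma cl_mono : Monotone cl := fun a b h => max_le_max le_rfl (min_le_min le_rfl h)

lemma continuous_cl : Continuous cl := continuous_const.max (continuous_const.min continuous_id)

lemma max_lip (c a b : ℝ) : |max c a - max c b| ≤ |a - b| := by
  have h1 := le_abs_self (a - b); have h2 := neg_abs_le (a - b)
  rcases le_total a c with h3 | h3 <;> rcases le_total b c with h4 | h4 <;>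
    simp only [max_eq_left, max_eq_right, h3, h4] <;> rw [abs_le] <;> constructor <;> linarith

lemma min_lip (c a b : ℝ) : |min c a - min c b| ≤ |a - b| := by
  have h1 := le_abs_self (a - b); have h2 := neg_abs_le (a - b)
  rcases le_total a c with h3 | h3 <;> rcases le_total b c with h4 | h4 <;>
    simp only [min_eq_left, min_eq_right, h3, h4] <;> rw [abs_le] <;> constructor <;> linarith

lemma cl_lip (a b : ℝ) : |cl a - cl b| ≤ |a - b| :=
  (max_lip 0 _ _).trans (min_lip 1 a b)

lemma abs_min_sub_min (a b c d : ℝ) : |min a b - min c d| ≤ |a - c| + |b - d| :=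
  calc |min a b - min c d| ≤ |min a b - min a d| + |min a d - min c d| := abs_sub_le _ _ _
    _ ≤ |b - d| + |a - c| := add_le_add (min_lip a b d) (by rw [min_comm a d, min_comm c d]; exact min_lip d a c)
    _ = |a - c| + |b - d| := add_comm _ _

lemma abs_max_sub_max (a b c d : ℝ) : |max a b - max c d| ≤ |a - c| + |b - d| :=
  calc |max a b - max c d| ≤ |max a b - max a d| + |max a d - max c d| := abs_sub_le _ _ _
    _ ≤ |b - d| + |a - c| := add_le_add (max_lip a b d) (by rw [max_comm a d, max_comm c d]; exact max_lip d a c)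
    _ = |a - c| + |b - d| := add_comm _ _

/-! ### serial paths -/

abbrev Pt (n : ℕ) := Fin (n+1) → ℝ
abbrev Pr (n : ℕ) := Pt n × Pt n

variable {n : ℕ}

def spath (ord : Fin (n+1) → ℕ) (x y : Pt n) (t : ℝ) : Pt n :=
  fun k => x k + (y k - x k) * cl ((n+1) * t - ord k)

lemma spath_left {ord : Fin (n+1) → ℕ} {x y : Pt n} {t : ℝ} {k}
    (h : (n+1) * t ≤ ord k) : spath ord x y t k = x k := by
  unfold spath; rw [cl_of_nonpos (by linarith), mul_zero, add_zero]

lemma spath_right {ord : Fin (n+1) → ℕ} {x y : Pt n} {t : ℝ} {k}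
    (h : (ord k : ℝ) + 1 ≤ (n+1) * t) : spath ord x y t k = y k := by
  unfold spath; rw [cl_of_one_le (by linarith)]; ring

lemma spath_zero {ord : Fin (n+1) → ℕ} {x y : Pt n} {k} : spath ord x y 0 k = x k :=
  spath_left (by rw [mul_zero]; exact Nat.cast_nonneg _)

lemma spath_one {ord : Fin (n+1) → ℕ} {x y : Pt n} {k} (hk : ord k ≤ n) :
    spath ord x y 1 k = y k := by
  apply spath_right
  have : (ord k : ℝ) ≤ n := by exact_mod_cast hk
  linarith

lemma spath_mem {ord : Fin (n+1) → ℕ} {x y : Pt n} {t : ℝ} {k}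
    (hx : x k ∈ Icc (0:ℝ) 1) (hy : y k ∈ Icc (0:ℝ) 1) (hxy : x k ≤ y k) :
    spath ord x y t k ∈ Icc (0:ℝ) 1 := by
  obtain ⟨hc0, hc1⟩ := cl_mem ((n+1) * t - ord k)
  constructor <;> unfold spath <;> nlinarith [hx.1, hy.2]

lemma spath_mono {ord : Fin (n+1) → ℕ} {x y : Pt n} {k} (hxy : x k ≤ y k) :
    Monotone fun t : ℝ => spath ord x y t k := by
  intro s t h
  show spath ord x y s k ≤ spath ord x y t k
  have hc : cl ((n+1) * s - ord k) ≤ cl ((n+1) * t - ord k) :=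
    cl_mono (by nlinarith)
  have hm := mul_le_mul_of_nonneg_left hc (sub_nonneg.2 hxy)
  unfold spath
  linarith

def Dcond (ord : Fin (n+1) → ℕ) (p : Pr n) : Prop :=
  ∀ k, (∃ j, ord j < ord k ∧ (p.2 j = 0 ∨ p.2 j = 1)) ∨
       (∃ j, ord k < ord j ∧ (p.1 j = 0 ∨ p.1 j = 1)) ∨
       (p.1 k = p.2 k ∧ (p.1 k = 0 ∨ p.1 k = 1))

def Bset (ord : Fin (n+1) → ℕ) : Set (Pr n) :=
  {p | (∀ i, p.1 i ∈ Icc (0:ℝ) 1) ∧ (∀ i, p.2 i ∈ Icc (0:ℝ) 1) ∧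
    (∀ i, p.1 i ≤ p.2 i) ∧ Dcond ord p}

lemma spath_bdry {ord : Fin (n+1) → ℕ} (hord : ∀ m : ℕ, m ≤ n → ∃ k, ord k = m)
    {p : Pr n} (hp : p ∈ Bset ord) {t : ℝ} (ht : t ∈ Icc (0:ℝ) 1) :
    ∃ i, spath ord p.1 p.2 t i = 0 ∨ spath ord p.1 p.2 t i = 1 := by
  obtain ⟨hx, hy, hxy, hD⟩ := hp
  set m : ℕ := min n ⌊(n+1) * t⌋₊ with hm
  have h0 : (0:ℝ) ≤ (n+1) * t := mul_nonneg (by positivity) ht.1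
  have h1 : (m:ℝ) ≤ (n+1) * t := by
    have hmle : m ≤ ⌊(n+1)*t⌋₊ := by rw [hm]; exact min_le_right _ _
    calc (m:ℝ) ≤ (⌊(n+1)*t⌋₊ : ℝ) := by exact_mod_cast hmle
      _ ≤ (n+1)*t := Nat.floor_le h0
  have h2 : (n+1) * t ≤ (m:ℝ) + 1 := by
    rcases min_cases n ⌊(n+1)*t⌋₊ with ⟨he, _⟩ | ⟨he, _⟩
    · rw [hm, he]; push_cast; nlinarith [ht.2]
    · rw [hm, he]
      exact le_of_lt (Nat.lt_floor_add_one _)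
  obtain ⟨k, hk⟩ := hord m (min_le_left _ _)
  have key1 : ∀ j, ord j < m → spath ord p.1 p.2 t j = p.2 j := by
    intro j hj
    apply spath_right
    have : (ord j : ℝ) + 1 ≤ m := by exact_mod_cast hj
    linarith
  have key2 : ∀ j, m < ord j → spath ord p.1 p.2 t j = p.1 j := by
    intro j hj
    apply spath_left
    have : (m : ℝ) + 1 ≤ ord j := by exact_mod_cast hj
    linarith
  rcases hD k with ⟨j, hj, hv⟩ | ⟨j, hj, hv⟩ | ⟨he, hv⟩
  · exact ⟨j, by rw [key1 j (hk ▸ hj)]; exact hv⟩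
  · exact ⟨j, by rw [key2 j (hk ▸ hj)]; exact hv⟩
  · refine ⟨k, ?_⟩
    have : spath ord p.1 p.2 t k = p.1 k := by unfold spath; rw [← he]; ring
    rw [this]; exact hv

lemma continuous_spath (ord : Fin (n+1) → ℕ) :
    Continuous fun q : Pr n × ℝ => spath ord q.1.1 q.1.2 q.2 := by
  apply continuous_pi; intro k
  unfold spath
  have e1 : Continuous fun q : Pr n × ℝ => q.1.1 k :=
    (continuous_apply k).comp (continuous_fst.comp continuous_fst)
  have e2 : Continuous fun q : Pr n × ℝ => q.1.2 k :=
    (continuous_apply k).comp (continuous_snd.comp continuous_fst)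
  have e3 : Continuous fun q : Pr n × ℝ => cl ((n+1) * q.2 - ord k) :=
    continuous_cl.comp ((continuous_const.mul continuous_snd).sub continuous_const)
  exact e1.add ((e2.sub e1).mul e3)

/-- The serial path as a continuous map on `unitInterval`. -/
def bPath (ord : Fin (n+1) → ℕ) (p : Pr n) : C(unitInterval, Pt n) :=
  ⟨fun t => spath ord p.1 p.2 (t:ℝ),
   (continuous_spath ord).comp (continuous_const.prodMk continuous_subtype_val)⟩

lemma bPath_spec {ord : Fin (n+1) → ℕ} (hord : ∀ m : ℕ, m ≤ n → ∃ k, ord k = m)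
    (hle : ∀ k, ord k ≤ n) {p : Pr n} (hp : p ∈ Bset ord) :
    (∀ t, bPath ord p t ∈ cubeBdry n) ∧ (∀ i, Monotone fun t => bPath ord p t i) ∧
      bPath ord p 0 = p.1 ∧ bPath ord p 1 = p.2 := by
  obtain ⟨hx, hy, hxy, -⟩ := id hp
  refine ⟨?_, ?_, ?_, ?_⟩
  · intro t
    exact ⟨fun i => spath_mem (hx i) (hy i) (hxy i), spath_bdry hord hp t.2⟩
  · intro i a b hab
    exact spath_mono (hxy i) (Subtype.coe_le_coe.2 hab)
  · funext k
    show spath ord p.1 p.2 ((0 : unitInterval) : ℝ) k = p.1 k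
    rw [Set.Icc.coe_zero, spath_zero]
  · funext k
    show spath ord p.1 p.2 ((1 : unitInterval) : ℝ) k = p.2 k
    rw [Set.Icc.coe_one, spath_one (hle k)]

lemma Bset_subset_gamma {ord : Fin (n+1) → ℕ} (hord : ∀ m : ℕ, m ≤ n → ∃ k, ord k = m)
    (hle : ∀ k, ord k ≤ n) : Bset ord ⊆ sphereGamma n := by
  intro p hp
  obtain ⟨h1, h2, h3, h4⟩ := bPath_spec hord hle hp
  exact ⟨bPath ord p, h1, h2, h3, h4⟩

lemma exists_sec {ord : Fin (n+1) → ℕ} (hord : ∀ m : ℕ, m ≤ n → ∃ k, ord k = m)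
    (hle : ∀ k, ord k ≤ n) (S : Set (Pr n)) (hS : S ⊆ Bset ord) :
    ∃ sec : C(↥S, SphereDiPath n),
      ∀ p, (sec p).1 0 = p.1.1 ∧ (sec p).1 1 = p.1.2 := by
  have hcont : Continuous fun p : ↥S => bPath ord p.1 := by
    have : Continuous fun q : ↥S × unitInterval => spath ord q.1.1.1 q.1.1.2 (q.2 : ℝ) := by
      exact (continuous_spath ord).comp
        ((continuous_subtype_val.comp continuous_fst).prodMk
          (continuous_subtype_val.comp continuous_snd))
    exact (ContinuousMap.mk _ this).curry.continuous
  refine ⟨⟨fun p => ⟨bPath ord p.1,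
      (bPath_spec hord hle (hS p.2)).1, (bPath_spec hord hle (hS p.2)).2.1⟩,
      hcont.subtype_mk _⟩, fun p =>
    ⟨(bPath_spec hord hle (hS p.2)).2.2.1, (bPath_spec hord hle (hS p.2)).2.2.2⟩⟩

/-! ### the two orders and the characterization of Γ -/

def ord1 (n : ℕ) : Fin (n+1) → ℕ := fun k => k
def ord2 (n : ℕ) : Fin (n+1) → ℕ := fun k => n - k

lemma ord1_surj : ∀ m : ℕ, m ≤ n → ∃ k : Fin (n+1), ord1 n k = m :=
  fun m hm => ⟨⟨m, Nat.lt_succ_of_le hm⟩, rfl⟩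

lemma ord1_le : ∀ k : Fin (n+1), ord1 n k ≤ n := fun k => Nat.lt_succ_iff.1 k.2

lemma ord1_inj : Function.Injective (ord1 n) := fun a b h => Fin.ext h

lemma ord2_surj : ∀ m : ℕ, m ≤ n → ∃ k : Fin (n+1), ord2 n k = m :=
  fun m hm => ⟨⟨n - m, Nat.lt_succ_of_le (Nat.sub_le _ _)⟩, by
    show n - (n - m) = m; omega⟩

lemma ord2_le : ∀ k : Fin (n+1), ord2 n k ≤ n := fun _ => Nat.sub_le _ _

lemma ord2_inj : Function.Injective (ord2 n) := fun a b h => by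
  have ha := Nat.lt_succ_iff.1 a.2
  have hb := Nat.lt_succ_iff.1 b.2
  have : (a:ℕ) = b := by unfold ord2 at h; omega
  exact Fin.ext this

lemma Dcond_of_eq {ord : Fin (n+1) → ℕ} (hinj : Function.Injective ord) {p : Pr n}
    (i : Fin (n+1)) (he : p.1 i = p.2 i) (hv : p.1 i = 0 ∨ p.1 i = 1) : Dcond ord p := by
  intro k
  rcases lt_trichotomy (ord i) (ord k) with h | h | h
  · exact Or.inl ⟨i, h, by rw [← he]; exact hv⟩
  · rcases hinj h with rfl
    exact Or.inr (Or.inr ⟨he, hv⟩)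
  · exact Or.inr (Or.inl ⟨i, h, hv⟩)

lemma Dcond_of_zero_one {ord : Fin (n+1) → ℕ} {p : Pr n} (i j : Fin (n+1))
    (hij : ord j < ord i) (hx : p.1 i = 0) (hy : p.2 j = 1) : Dcond ord p := by
  intro k
  rcases lt_or_ge (ord j) (ord k) with h | h
  · exact Or.inl ⟨j, h, Or.inr hy⟩
  · exact Or.inr (Or.inl ⟨i, lt_of_le_of_lt h hij, Or.inl hx⟩)

/-- The 0/1-pattern characterization of reachability. -/
def charSet (n : ℕ) : Set (Pr n) :=
  {p | (∀ i, p.1 i ∈ Icc (0:ℝ) 1) ∧ (∀ i, p.2 i ∈ Icc (0:ℝ) 1) ∧ (∀ i, p.1 i ≤ p.2 i) ∧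
    ((∃ i j, i ≠ j ∧ p.1 i = 0 ∧ p.2 j = 1) ∨ (∃ i, p.1 i = p.2 i ∧ (p.1 i = 0 ∨ p.1 i = 1)))}

lemma gamma_subset_char : sphereGamma n ⊆ charSet n := by
  rintro p ⟨γ, hbd, hmono, h0, h1⟩
  have h01 : (0:unitInterval) ≤ 1 := by
    rw [← Subtype.coe_le_coe, Set.Icc.coe_zero, Set.Icc.coe_one]; exact zero_le_one
  have hx : ∀ i, p.1 i ∈ Icc (0:ℝ) 1 := fun i => by
    rw [← congrFun h0 i]; exact (hbd 0).1 i
  have hy : ∀ i, p.2 i ∈ Icc (0:ℝ) 1 := fun i => by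
    rw [← congrFun h1 i]; exact (hbd 1).1 i
  have hxle : ∀ i, p.1 i ≤ p.2 i := fun i => by
    have h := hmono i h01
    simp only at h
    rwa [congrFun h0 i, congrFun h1 i] at h
  refine ⟨hx, hy, hxle, ?_⟩
  by_contra hcon
  push_neg at hcon
  obtain ⟨hc1, hc2⟩ := hcon
  -- a coordinate of `p.1` equal to 0
  obtain ⟨i0, hi0⟩ := (hbd 0).2
  rw [congrFun h0 i0] at hi0
  have hxi0 : p.1 i0 = 0 := by
    rcases hi0 with h | h
    · exact h
    · exfalso
      have h2 : p.2 i0 = 1 := le_antisymm (hy i0).2 (h ▸ hxle i0)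
      exact (hc2 i0 (by rw [h, h2])).2 h
  -- a coordinate of `p.2` equal to 1
  obtain ⟨j0, hj0⟩ := (hbd 1).2
  rw [congrFun h1 j0] at hj0
  have hyj0 : p.2 j0 = 1 := by
    rcases hj0 with h | h
    · exfalso
      have h2 : p.1 j0 = 0 := le_antisymm (h ▸ hxle j0) (hx j0).1
      exact (hc2 j0 (by rw [h, h2])).1 h2
    · exact h
  have hiz : ∀ i, p.1 i = 0 → i = j0 := fun i hi => by
    by_contra hne; exact hc1 i j0 hne hi hyj0
  have hjo : ∀ j, p.2 j = 1 → j = i0 := fun j hj => by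
    by_contra hne; exact hc1 i0 j (fun he => hne he.symm) hxi0 hj
  have hcc : i0 = j0 := hiz i0 hxi0
  -- all other coordinates are trapped in the open interval
  have htrap : ∀ i, i ≠ i0 → 0 < p.1 i ∧ p.2 i < 1 := by
    intro i hi
    constructor
    · rcases lt_or_eq_of_le (hx i).1 with h | h
      · exact h
      · exact absurd (hcc ▸ hiz i h.symm) hi
    · rcases lt_or_eq_of_le (hy i).2 with h | h
      · exact h
      · exact absurd (hjo i h) hi
  -- intermediate value to reach 1/2 on coordinate i0
  set f : ℝ → ℝ := fun s => γ (projIcc 0 1 zero_le_one s) i0 with hf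
  have hfc : Continuous f := (continuous_apply i0).comp (γ.continuous.comp continuous_projIcc)
  have hp0 : projIcc (0:ℝ) 1 zero_le_one 0 = (0:unitInterval) := by
    apply Subtype.ext
    rw [Set.Icc.coe_zero, Set.coe_projIcc]
    norm_num
  have hp1 : projIcc (0:ℝ) 1 zero_le_one 1 = (1:unitInterval) := by
    apply Subtype.ext
    rw [Set.Icc.coe_one, Set.coe_projIcc]
    norm_num
  have hf0 : f 0 = 0 := by rw [hf]; simp only [hp0]; rw [congrFun h0 i0]; exact hxi0
  have hf1 : f 1 = 1 := by rw [hf]; simp only [hp1]; rw [congrFun h1 i0, hcc]; exact hyj0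
  have hmem : (1/2 : ℝ) ∈ Icc (f 0) (f 1) := by rw [hf0, hf1]; norm_num
  obtain ⟨s, _, hfs⟩ := intermediate_value_Icc zero_le_one hfc.continuousOn hmem
  set u : unitInterval := projIcc 0 1 zero_le_one s with hu
  have hγu : γ u i0 = 1/2 := hfs
  obtain ⟨i, hi⟩ := (hbd u).2
  have h0u : (0:unitInterval) ≤ u := by
    rw [← Subtype.coe_le_coe, Set.Icc.coe_zero]; exact u.2.1
  have hu1 : u ≤ 1 := by
    rw [← Subtype.coe_le_coe, Set.Icc.coe_one]; exact u.2.2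
  by_cases hic : i = i0
  · rw [hic, hγu] at hi
    rcases hi with h | h <;> norm_num at h
  · obtain ⟨hlo, hhi⟩ := htrap i hic
    have hge : p.1 i ≤ γ u i := by
      have h := hmono i h0u
      simp only at h
      rwa [congrFun h0 i] at h
    have hle' : γ u i ≤ p.2 i := by
      have h := hmono i hu1
      simp only at h
      rwa [congrFun h1 i] at h
    rcases hi with h | h
    · linarith
    · linarith

lemma char_subset_union : charSet n ⊆ Bset (ord1 n) ∪ Bset (ord2 n) := by
  rintro p ⟨hx, hy, hxy, hD⟩
  rcases hD with ⟨i, j, hij, hxi, hyj⟩ | ⟨i, he, hv⟩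
  · have hi := Nat.lt_succ_iff.1 i.2
    have hj := Nat.lt_succ_iff.1 j.2
    have hvne : (i:ℕ) ≠ (j:ℕ) := fun h => hij (Fin.ext h)
    rcases lt_or_gt_of_ne hvne with h | h
    · -- i < j : reverse order
      right
      refine ⟨hx, hy, hxy, Dcond_of_zero_one i j ?_ hxi hyj⟩
      show n - (j:ℕ) < n - (i:ℕ); omega
    · -- j < i : natural order
      left
      exact ⟨hx, hy, hxy, Dcond_of_zero_one i j h hxi hyj⟩
  · left
    exact ⟨hx, hy, hxy, Dcond_of_eq ord1_inj i he hv⟩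

lemma gamma_eq_union : sphereGamma n = Bset (ord1 n) ∪ Bset (ord2 n) := by
  apply Set.Subset.antisymm
  · exact fun p hp => char_subset_union (gamma_subset_char hp)
  · exact Set.union_subset (Bset_subset_gamma ord1_surj ord1_le)
      (Bset_subset_gamma ord2_surj ord2_le)

/-! ### ENR machinery -/

def goodPt (p : Pr n) : Prop :=
  (∀ i, p.1 i ∈ Icc (0:ℝ) 1) ∧ (∀ i, p.2 i ∈ Icc (0:ℝ) 1) ∧ ∀ i, p.1 i ≤ p.2 i

def snp (τ v : ℝ) : ℝ := cl ((v - τ) / (1 - 2*τ))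

lemma snp_mem (τ v : ℝ) : snp τ v ∈ Icc (0:ℝ) 1 := cl_mem _

lemma snp_mono {τ : ℝ} (hτ : τ < 1/2) : Monotone (snp τ) := by
  intro a b h
  apply cl_mono
  rw [div_le_div_iff₀ (by linarith) (by linarith)]
  nlinarith

lemma snp_of_le {τ v : ℝ} (hτ : τ < 1/2) (hv : v ≤ τ) : snp τ v = 0 :=
  cl_of_nonpos (by rw [div_le_iff₀ (by linarith : (0:ℝ) < 1 - 2*τ)]; linarith)

lemma snp_of_ge {τ v : ℝ} (h0 : 0 ≤ τ) (hτ : τ < 1/2) (hv : 1 - τ ≤ v) : snp τ v = 1 :=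
  cl_of_one_le (by rw [le_div_iff₀ (by linarith : (0:ℝ) < 1 - 2*τ)]; linarith)

lemma snp_zero_of_mem {v : ℝ} (hv : v ∈ Icc (0:ℝ) 1) : snp 0 v = v := by
  unfold snp
  norm_num
  exact cl_of_mem hv

def rmap (A : Set (Pr n)) (z : Pr n) : Pr n :=
  (fun i => snp (2 * infDist z A) (min (cl (z.1 i)) ((cl (z.1 i) + cl (z.2 i))/2)),
   fun i => snp (2 * infDist z A) (max (cl (z.2 i)) ((cl (z.1 i) + cl (z.2 i))/2)))

lemma continuous_rmap_on (A : Set (Pr n)) :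
    Continuous fun z : {z : Pr n // infDist z A < 1/8} => rmap A z.1 := by
  have hτ : Continuous fun z : {z : Pr n // infDist z A < 1/8} => 2 * infDist z.1 A :=
    continuous_const.mul ((continuous_infDist_pt A).comp continuous_subtype_val)
  have hx : ∀ i : Fin (n+1), Continuous fun z : {z : Pr n // infDist z A < 1/8} => cl (z.1.1 i) :=
    fun i => continuous_cl.comp ((continuous_apply i).comp
      (continuous_fst.comp continuous_subtype_val))
  have hy : ∀ i : Fin (n+1), Continuous fun z : {z : Pr n // infDist z A < 1/8} => cl (z.1.2 i) :=
    fun i => continuous_cl.comp ((continuous_apply i).comp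
      (continuous_snd.comp continuous_subtype_val))
  have hsnp : ∀ f : {z : Pr n // infDist z A < 1/8} → ℝ, Continuous f →
      Continuous fun z => snp (2 * infDist z.1 A) (f z) := by
    intro f hf
    unfold snp
    apply continuous_cl.comp
    apply Continuous.div (hf.sub hτ) (continuous_const.sub (continuous_const.mul hτ))
    intro z
    have h1 := z.2
    have h2 := infDist_nonneg (s := A) (x := z.1)
    show 1 - 2 * (2 * infDist z.1 A) ≠ 0
    have : infDist z.1 A < 1/8 := h1
    nlinarith
  unfold rmap
  apply Continuous.prodMk
  · exact continuous_pi fun i => hsnp _ ((hx i).min (((hx i).add (hy i)).div_const 2))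
  · exact continuous_pi fun i => hsnp _ ((hy i).max (((hx i).add (hy i)).div_const 2))

lemma coord_bound1 (z g : Pr n) (i : Fin (n+1)) : |z.1 i - g.1 i| ≤ dist z g := by
  have h1 : dist (z.1 i) (g.1 i) ≤ dist z.1 g.1 := dist_le_pi_dist z.1 g.1 i
  have h2 : dist z.1 g.1 ≤ dist z g := by rw [Prod.dist_eq]; exact le_max_left _ _
  rw [Real.dist_eq] at h1
  linarith

lemma coord_bound2 (z g : Pr n) (i : Fin (n+1)) : |z.2 i - g.2 i| ≤ dist z g := by
  have h1 : dist (z.2 i) (g.2 i) ≤ dist z.2 g.2 := dist_le_pi_dist z.2 g.2 i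
  have h2 : dist z.2 g.2 ≤ dist z g := by rw [Prod.dist_eq]; exact le_max_right _ _
  rw [Real.dist_eq] at h1
  linarith

lemma rmap_fix (A : Set (Pr n)) (z : Pr n) (hz : z ∈ A) (hgood : goodPt z) :
    rmap A z = z := by
  obtain ⟨hx, hy, hxy⟩ := hgood
  have hd : infDist z A = 0 := infDist_zero_of_mem hz
  have hcx : ∀ i, cl (z.1 i) = z.1 i := fun i => cl_of_mem (hx i)
  have hcy : ∀ i, cl (z.2 i) = z.2 i := fun i => cl_of_mem (hy i)
  unfold rmap
  rw [hd]
  ext i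
  · show snp (2*0) (min (cl (z.1 i)) ((cl (z.1 i) + cl (z.2 i))/2)) = z.1 i
    rw [mul_zero, hcx i, hcy i, min_eq_left (by linarith [hxy i])]
    exact snp_zero_of_mem (hx i)
  · show snp (2*0) (max (cl (z.2 i)) ((cl (z.1 i) + cl (z.2 i))/2)) = z.2 i
    rw [mul_zero, hcx i, hcy i, max_eq_left (by linarith [hxy i])]
    exact snp_zero_of_mem (hy i)

lemma isENR_of_pattern (A : Set (Pr n)) (hne : A.Nonempty) (hclosed : IsClosed A)
    (hgood : ∀ p ∈ A, goodPt p)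
    (hstab : ∀ g ∈ A, ∀ w : Pr n, goodPt w →
      (∀ i, (g.1 i = 0 → w.1 i = 0) ∧ (g.1 i = 1 → w.1 i = 1) ∧
            (g.2 i = 0 → w.2 i = 0) ∧ (g.2 i = 1 → w.2 i = 1)) → w ∈ A) :
    IsENR A := by
  refine ⟨{z | infDist z A < 1/8},
    isOpen_lt (continuous_infDist_pt A) continuous_const, ?_, ?_⟩
  · intro z hz
    show infDist z A < 1/8
    rw [infDist_zero_of_mem hz]; norm_num
  refine ⟨⟨fun z => rmap A z.1, continuous_rmap_on A⟩, ?_, ?_⟩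
  · -- lands in A
    rintro ⟨z, hz⟩
    show rmap A z ∈ A
    obtain ⟨g, hgA, hgd⟩ := hclosed.exists_infDist_eq_dist hne z
    obtain ⟨hgx, hgy, hgxy⟩ := hgood g hgA
    set d := infDist z A with hdd
    have hd0 : 0 ≤ d := infDist_nonneg
    have hd8 : d < 1/8 := hz
    have hτ : 2 * d < 1/2 := by linarith
    -- coordinate error bounds
    have hu : ∀ i, |min (cl (z.1 i)) ((cl (z.1 i) + cl (z.2 i))/2) - g.1 i| ≤ 2*d := by
      intro i
      have e1 : |cl (z.1 i) - g.1 i| ≤ d := by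
        rw [← cl_of_mem (hgx i)]
        exact (cl_lip _ _).trans (hgd ▸ coord_bound1 z g i)
      have e2 : |cl (z.2 i) - g.2 i| ≤ d := by
        rw [← cl_of_mem (hgy i)]
        exact (cl_lip _ _).trans (hgd ▸ coord_bound2 z g i)
      have e3 : |(cl (z.1 i) + cl (z.2 i))/2 - (g.1 i + g.2 i)/2| ≤ d := by
        rw [abs_le] at e1 e2 ⊢
        constructor <;> [linarith [e1.1, e2.1]; linarith [e1.2, e2.2]]
      have hg : g.1 i = min (g.1 i) ((g.1 i + g.2 i)/2) :=
        (min_eq_left (by linarith [hgxy i])).symm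
      calc |min (cl (z.1 i)) ((cl (z.1 i) + cl (z.2 i))/2) - g.1 i|
          = |min (cl (z.1 i)) ((cl (z.1 i) + cl (z.2 i))/2)
              - min (g.1 i) ((g.1 i + g.2 i)/2)| := by rw [← hg]
        _ ≤ |cl (z.1 i) - g.1 i| + |(cl (z.1 i) + cl (z.2 i))/2 - (g.1 i + g.2 i)/2| :=
            abs_min_sub_min _ _ _ _
        _ ≤ 2*d := by linarith
    have hv : ∀ i, |max (cl (z.2 i)) ((cl (z.1 i) + cl (z.2 i))/2) - g.2 i| ≤ 2*d := by
      intro i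
      have e1 : |cl (z.1 i) - g.1 i| ≤ d := by
        rw [← cl_of_mem (hgx i)]
        exact (cl_lip _ _).trans (hgd ▸ coord_bound1 z g i)
      have e2 : |cl (z.2 i) - g.2 i| ≤ d := by
        rw [← cl_of_mem (hgy i)]
        exact (cl_lip _ _).trans (hgd ▸ coord_bound2 z g i)
      have e3 : |(cl (z.1 i) + cl (z.2 i))/2 - (g.1 i + g.2 i)/2| ≤ d := by
        rw [abs_le] at e1 e2 ⊢
        constructor <;> [linarith [e1.1, e2.1]; linarith [e1.2, e2.2]]
      have hg : g.2 i = max (g.2 i) ((g.1 i + g.2 i)/2) :=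
        (max_eq_left (by linarith [hgxy i])).symm
      calc |max (cl (z.2 i)) ((cl (z.1 i) + cl (z.2 i))/2) - g.2 i|
          = |max (cl (z.2 i)) ((cl (z.1 i) + cl (z.2 i))/2)
              - max (g.2 i) ((g.1 i + g.2 i)/2)| := by rw [← hg]
        _ ≤ |cl (z.2 i) - g.2 i| + |(cl (z.1 i) + cl (z.2 i))/2 - (g.1 i + g.2 i)/2| :=
            abs_max_sub_max _ _ _ _
        _ ≤ 2*d := by linarith
    -- goodness of the image
    have hgoodw : goodPt (rmap A z) := by
      refine ⟨fun i => snp_mem _ _, fun i => snp_mem _ _, fun i => ?_⟩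
      show snp (2*d) _ ≤ snp (2*d) _
      apply snp_mono hτ
      exact le_trans (min_le_right _ _) (le_max_right _ _)
    refine hstab g hgA _ hgoodw fun i => ?_
    have hui := hu i
    have hvi := hv i
    rw [abs_le] at hui hvi
    refine ⟨?_, ?_, ?_, ?_⟩ <;> intro hgi
    · show snp (2*d) _ = 0
      exact snp_of_le hτ (by rw [hgi] at hui; linarith [hui.2])
    · show snp (2*d) _ = 1
      exact snp_of_ge (by linarith) hτ (by rw [hgi] at hui; linarith [hui.1])
    · show snp (2*d) _ = 0
      exact snp_of_le hτ (by rw [hgi] at hvi; linarith [hvi.2])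
    · show snp (2*d) _ = 1
      exact snp_of_ge (by linarith) hτ (by rw [hgi] at hvi; linarith [hvi.1])
  · -- fixes A
    rintro ⟨z, hz⟩ hzA
    show rmap A z = z
    exact rmap_fix A z hzA (hgood z hzA)

lemma isENR_relOpen {Y : Type*} [TopologicalSpace Y] {B A : Set Y} (hB : IsENR B)
    (hAB : A ⊆ B) (V : Set Y) (hV : IsOpen V) (hAV : A = B ∩ V) : IsENR A := by
  obtain ⟨U, hU, hBU, r, hr1, hr2⟩ := hB
  have hsub : {z | ∃ hz : z ∈ U, r ⟨z, hz⟩ ∈ V} ⊆ U := by rintro z ⟨hz, -⟩; exact hz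
  refine ⟨{z | ∃ hz : z ∈ U, r ⟨z, hz⟩ ∈ V}, ?_, ?_, ?_⟩
  · have he : {z | ∃ hz : z ∈ U, r ⟨z, hz⟩ ∈ V} = Subtype.val '' ((fun u => r u) ⁻¹' V) := by
      ext z
      constructor
      · rintro ⟨hz, hrz⟩; exact ⟨⟨z, hz⟩, hrz, rfl⟩
      · rintro ⟨⟨w, hw⟩, hrw, rfl⟩; exact ⟨hw, hrw⟩
    rw [he]
    exact hU.isOpenMap_subtype_val _ (hV.preimage r.continuous)
  · intro a ha
    have haB : a ∈ B := hAB ha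
    refine ⟨hBU haB, ?_⟩
    rw [hr2 ⟨a, hBU haB⟩ haB]
    exact (hAV ▸ ha).2
  · refine ⟨⟨fun w => r (Set.inclusion hsub w), r.continuous.comp (continuous_inclusion hsub)⟩,
      ?_, ?_⟩
    · rintro ⟨z, hz, hrz⟩
      rw [hAV]
      exact ⟨hr1 _, hrz⟩
    · rintro ⟨z, hz⟩ hzA
      exact hr2 _ (hAB hzA)

/-! ### ENR instantiations -/

lemma isClosed_Bset (ord : Fin (n+1) → ℕ) : IsClosed (Bset ord) := by
  have cx : ∀ i : Fin (n+1), Continuous fun p : Pr n => p.1 i :=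
    fun i => (continuous_apply i).comp continuous_fst
  have cy : ∀ i : Fin (n+1), Continuous fun p : Pr n => p.2 i :=
    fun i => (continuous_apply i).comp continuous_snd
  have h01 : ∀ f : Pr n → ℝ, Continuous f → IsClosed {p : Pr n | f p = 0 ∨ f p = 1} := by
    intro f hf
    rw [Set.setOf_or]
    exact (isClosed_eq hf continuous_const).union (isClosed_eq hf continuous_const)
  have hD : IsClosed {p : Pr n | Dcond ord p} := by
    unfold Dcond
    rw [Set.setOf_forall]
    apply isClosed_iInter
    intro k
    rw [Set.setOf_or, Set.setOf_or]
    refine IsClosed.union ?_ (IsClosed.union ?_ ?_)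
    · rw [Set.setOf_exists]
      apply isClosed_iUnion_of_finite
      intro j
      by_cases hc : ord j < ord k
      · simp only [hc, true_and]; exact h01 _ (cy j)
      · simp only [hc, false_and, Set.setOf_false]; exact isClosed_empty
    · rw [Set.setOf_exists]
      apply isClosed_iUnion_of_finite
      intro j
      by_cases hc : ord k < ord j
      · simp only [hc, true_and]; exact h01 _ (cx j)
      · simp only [hc, false_and, Set.setOf_false]; exact isClosed_empty
    · rw [Set.setOf_and]
      exact (isClosed_eq (cx k) (cy k)).inter (h01 _ (cx k))
  have hIcc1 : IsClosed {p : Pr n | ∀ i, p.1 i ∈ Icc (0:ℝ) 1} := by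
    rw [Set.setOf_forall]
    exact isClosed_iInter fun i => isClosed_Icc.preimage (cx i)
  have hIcc2 : IsClosed {p : Pr n | ∀ i, p.2 i ∈ Icc (0:ℝ) 1} := by
    rw [Set.setOf_forall]
    exact isClosed_iInter fun i => isClosed_Icc.preimage (cy i)
  have hle : IsClosed {p : Pr n | ∀ i, p.1 i ≤ p.2 i} := by
    rw [Set.setOf_forall]
    exact isClosed_iInter fun i => isClosed_le (cx i) (cy i)
  show IsClosed {p : Pr n | _ ∧ _ ∧ _ ∧ _}
  rw [Set.setOf_and, Set.setOf_and, Set.setOf_and]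
  exact hIcc1.inter (hIcc2.inter (hle.inter hD))

lemma Bset_good {ord : Fin (n+1) → ℕ} : ∀ p ∈ Bset ord, goodPt p :=
  fun _ hp => ⟨hp.1, hp.2.1, hp.2.2.1⟩

lemma Bset_stab (ord : Fin (n+1) → ℕ) : ∀ g ∈ Bset ord, ∀ w : Pr n, goodPt w →
    (∀ i, (g.1 i = 0 → w.1 i = 0) ∧ (g.1 i = 1 → w.1 i = 1) ∧
          (g.2 i = 0 → w.2 i = 0) ∧ (g.2 i = 1 → w.2 i = 1)) → w ∈ Bset ord := by
  rintro g ⟨-, -, -, hD⟩ w ⟨hwx, hwy, hwxy⟩ hpat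
  refine ⟨hwx, hwy, hwxy, fun k => ?_⟩
  rcases hD k with ⟨j, hj, hv⟩ | ⟨j, hj, hv⟩ | ⟨he, hv⟩
  · exact Or.inl ⟨j, hj, hv.imp (hpat j).2.2.1 (hpat j).2.2.2⟩
  · exact Or.inr (Or.inl ⟨j, hj, hv.imp (hpat j).1 (hpat j).2.1⟩)
  · refine Or.inr (Or.inr ?_)
    rcases hv with h0 | h1
    · have hw1 : w.1 k = 0 := (hpat k).1 h0
      have hw2 : w.2 k = 0 := (hpat k).2.2.1 (by rw [← he]; exact h0)
      exact ⟨by rw [hw1, hw2], Or.inl hw1⟩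
    · have hw1 : w.1 k = 1 := (hpat k).2.1 h1
      have hw2 : w.2 k = 1 := (hpat k).2.2.2 (by rw [← he]; exact h1)
      exact ⟨by rw [hw1, hw2], Or.inr hw1⟩

lemma Bset_nonempty (ord : Fin (n+1) → ℕ) : (Bset (n := n) ord).Nonempty :=
  ⟨((fun _ => 0), (fun _ => 0)),
    fun _ => ⟨le_rfl, zero_le_one⟩, fun _ => ⟨le_rfl, zero_le_one⟩, fun _ => le_rfl,
    fun _ => Or.inr (Or.inr ⟨rfl, Or.inl rfl⟩)⟩

lemma isENR_Bset (ord : Fin (n+1) → ℕ) : IsENR (Bset ord) :=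
  isENR_of_pattern _ (Bset_nonempty ord) (isClosed_Bset ord) Bset_good (Bset_stab ord)

lemma isENR_gamma : IsENR (sphereGamma n) := by
  rw [gamma_eq_union]
  apply isENR_of_pattern
  · exact (Bset_nonempty (ord1 n)).mono Set.subset_union_left
  · exact (isClosed_Bset (ord1 n)).union (isClosed_Bset (ord2 n))
  · rintro p (hp | hp) <;> exact Bset_good p hp
  · rintro g (hg | hg) w hw hpat
    · exact Or.inl (Bset_stab (ord1 n) g hg w hw hpat)
    · exact Or.inr (Bset_stab (ord2 n) g hg w hw hpat)

lemma isENR_A2 : IsENR (sphereGamma n \ Bset (ord1 n)) :=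
  isENR_relOpen isENR_gamma Set.diff_subset ((Bset (ord1 n))ᶜ)
    (isClosed_Bset (ord1 n)).isOpen_compl (Set.diff_eq _ _)

/-! ### lower bound: no global section -/

def ptt (a b : Fin (n+1)) (s r : ℝ) : Pt n :=
  fun i => if i = a then s else if i = b then r else 1/2

lemma ptt_a {a b : Fin (n+1)} (s r : ℝ) : ptt a b s r a = s := by
  unfold ptt; rw [if_pos rfl]

lemma ptt_b {a b : Fin (n+1)} (hab : a ≠ b) (s r : ℝ) : ptt a b s r b = r := by
  unfold ptt; rw [if_neg (fun h => hab h.symm), if_pos rfl]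

lemma ptt_oth {a b i : Fin (n+1)} (hia : i ≠ a) (hib : i ≠ b) (s r : ℝ) :
    ptt a b s r i = 1/2 := by
  unfold ptt; rw [if_neg hia, if_neg hib]

lemma ptt_symm {a b : Fin (n+1)} (hab : a ≠ b) (s : ℝ) : ptt a b s s = ptt b a s s := by
  funext i
  by_cases hia : i = a
  · rw [hia, ptt_a, ptt_b hab.symm]
  · by_cases hib : i = b
    · rw [hib, ptt_b hab, ptt_a]
    · rw [ptt_oth hia hib, ptt_oth hib hia]

lemma ptt_mem_gamma (a b : Fin (n+1)) (hab : a ≠ b) {t : ℝ} (ht : t ∈ Icc (0:ℝ) 1) :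
    (ptt a b t 0, ptt a b 1 1) ∈ sphereGamma n := by
  rw [gamma_eq_union]
  apply char_subset_union
  refine ⟨?_, ?_, ?_, Or.inl ⟨b, a, hab.symm, ptt_b hab t 0, ptt_a 1 1⟩⟩
  · intro i
    show ptt a b t 0 i ∈ Icc (0:ℝ) 1
    by_cases hia : i = a
    · rw [hia, ptt_a]; exact ht
    · by_cases hib : i = b
      · rw [hib, ptt_b hab]; exact ⟨le_rfl, zero_le_one⟩
      · rw [ptt_oth hia hib]; norm_num
  · intro i
    show ptt a b 1 1 i ∈ Icc (0:ℝ) 1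
    by_cases hia : i = a
    · rw [hia, ptt_a]; exact ⟨zero_le_one, le_rfl⟩
    · by_cases hib : i = b
      · rw [hib, ptt_b hab]; exact ⟨zero_le_one, le_rfl⟩
      · rw [ptt_oth hia hib]; norm_num
  · intro i
    show ptt a b t 0 i ≤ ptt a b 1 1 i
    by_cases hia : i = a
    · rw [hia, ptt_a, ptt_a]; exact ht.2
    · by_cases hib : i = b
      · rw [hib, ptt_b hab, ptt_b hab]; exact zero_le_one
      · rw [ptt_oth hia hib, ptt_oth hia hib]

/-- abbreviation for the projection ℝ → unitInterval -/
def pj : ℝ → unitInterval := projIcc 0 1 zero_le_one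

lemma pj_zero : pj 0 = 0 := by
  apply Subtype.ext
  rw [Set.Icc.coe_zero]
  show (max 0 (min 1 0) : ℝ) = 0
  norm_num

lemma pj_one : pj 1 = 1 := by
  apply Subtype.ext
  rw [Set.Icc.coe_one]
  show (max 0 (min 1 1) : ℝ) = 1
  norm_num

lemma pj_of_mem {s : ℝ} (hs : s ∈ Icc (0:ℝ) 1) : pj s = ⟨s, hs⟩ :=
  projIcc_of_mem _ hs

lemma pj_val (u : unitInterval) : pj (u : ℝ) = u := by
  rw [pj_of_mem u.2]

lemma uI_zero_le (u : unitInterval) : (0 : unitInterval) ≤ u := by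
  rw [← Subtype.coe_le_coe, Set.Icc.coe_zero]; exact u.2.1

lemma uI_le_one (u : unitInterval) : u ≤ (1 : unitInterval) := by
  rw [← Subtype.coe_le_coe, Set.Icc.coe_one]; exact u.2.2

lemma forced_passage {a b : Fin (n+1)} (hab : a ≠ b) {t : ℝ} (ht : 0 < t)
    (γ : C(unitInterval, Pt n)) (hbd : ∀ s, γ s ∈ cubeBdry n)
    (hmono : ∀ i, Monotone fun s => γ s i)
    (h0 : γ 0 = ptt a b t 0) (h1 : γ 1 = ptt a b 1 1) :
    ∃ s : unitInterval, γ s = ptt a b 1 0 := by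
  have hbox : ∀ (u : unitInterval) i, γ u i ∈ Icc (0:ℝ) 1 := fun u i => (hbd u).1 i
  have hhalf : ∀ (u : unitInterval) i, i ≠ a → i ≠ b → γ u i = 1/2 := by
    intro u i hia hib
    have hl : γ u i ≤ γ 1 i := hmono i (uI_le_one u)
    have hg : γ 0 i ≤ γ u i := hmono i (uI_zero_le u)
    rw [h1, ptt_oth hia hib] at hl
    rw [h0, ptt_oth hia hib] at hg
    linarith
  have ha_lb : ∀ u : unitInterval, t ≤ γ u a := by
    intro u
    have hg : γ 0 a ≤ γ u a := hmono a (uI_zero_le u)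
    rwa [h0, ptt_a] at hg
  have key1 : ∀ u : unitInterval, 0 < γ u b → γ u b < 1 → γ u a = 1 := by
    intro u hb0 hb1
    obtain ⟨i, hi⟩ := (hbd u).2
    by_cases hia : i = a
    · rw [hia] at hi
      rcases hi with h | h
      · exfalso; have := ha_lb u; linarith
      · exact h
    · by_cases hib : i = b
      · rw [hib] at hi; rcases hi with h | h <;> linarith
      · exfalso; rw [hhalf u i hia hib] at hi; rcases hi with h | h <;> norm_num at h
  have hγb_cont : Continuous fun s : ℝ => γ (pj s) b :=
    (continuous_apply b).comp (γ.continuous.comp continuous_projIcc)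
  have hγa_cont : Continuous fun s : ℝ => γ (pj s) a :=
    (continuous_apply a).comp (γ.continuous.comp continuous_projIcc)
  have hf0 : γ (pj 0) b = 0 := by rw [pj_zero, h0, ptt_b hab]
  have key : ∀ u : unitInterval, 0 < γ u b → γ u a = 1 := by
    intro u hb0
    rcases lt_or_ge (γ u b) 1 with hb1 | hb1
    · exact key1 u hb0 hb1
    · have hb1' : γ u b = 1 := le_antisymm (hbox u b).2 hb1
      have hmem : (1/2 : ℝ) ∈ Icc (γ (pj 0) b) (γ (pj (u:ℝ)) b) := by
        rw [hf0, pj_val, hb1']; norm_num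
      obtain ⟨s', hs', hv⟩ :=
        intermediate_value_Icc u.2.1 hγb_cont.continuousOn hmem
      have hv' : γ (pj s') b = 1/2 := hv
      have hs'a : γ (pj s') a = 1 := by
        apply key1 <;> rw [hv'] <;> norm_num
      have : γ (pj s') a ≤ γ u a := by
        have hle : pj s' ≤ u := by
          rw [← pj_val u]
          exact monotone_projIcc _ hs'.2
        exact hmono a hle
      exact le_antisymm (hbox u a).2 (by linarith)
  -- the last time at which coordinate b is 0
  set W : Set ℝ := {s | s ∈ Icc (0:ℝ) 1 ∧ γ (pj s) b = 0} with hW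
  have hWne : W.Nonempty := ⟨0, ⟨le_rfl, zero_le_one⟩, hf0⟩
  have hWclosed : IsClosed W := by
    apply IsClosed.inter isClosed_Icc
    exact isClosed_eq hγb_cont continuous_const
  have hWcompact : IsCompact W :=
    isCompact_Icc.of_isClosed_subset hWclosed (fun s hs => hs.1)
  set u : ℝ := sSup W with hu
  have huW : u ∈ W := hWcompact.sSup_mem hWne
  have hub : γ (pj u) b = 0 := huW.2
  have hu1 : u < 1 := by
    rcases lt_or_eq_of_le huW.1.2 with h | h
    · exact h
    · exfalso
      rw [h, pj_one, h1, ptt_b hab] at hub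
      norm_num at hub
  have hgt : ∀ s : ℝ, u < s → s ≤ 1 → γ (pj s) a = 1 := by
    intro s hus hs1
    have hs0 : (0:ℝ) ≤ s := le_trans huW.1.1 hus.le
    have hbpos : 0 < γ (pj s) b := by
      rcases lt_or_eq_of_le (hbox (pj s) b).1 with h | h
      · exact h
      · exfalso
        have hsW : s ∈ W := ⟨⟨hs0, hs1⟩, h.symm⟩
        have : s ≤ u := le_csSup ⟨1, fun w hw => hw.1.2⟩ hsW
        linarith
    exact key (pj s) hbpos
  have hua : γ (pj u) a = 1 := by
    have htt : Filter.Tendsto (fun s : ℝ => γ (pj s) a)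
        (nhdsWithin u (Ioi u)) (nhds (γ (pj u) a)) :=
      hγa_cont.continuousAt.continuousWithinAt
    have hev1 : ∀ᶠ s in nhdsWithin u (Ioi u), s < 1 :=
      mem_nhdsWithin_of_mem_nhds (Iio_mem_nhds hu1)
    have hev2 : ∀ᶠ s in nhdsWithin u (Ioi u), s ∈ Ioi u := self_mem_nhdsWithin
    have hev : ∀ᶠ s in nhdsWithin u (Ioi u), γ (pj s) a = 1 :=
      (hev1.and hev2).mono fun s hs => hgt s hs.2 hs.1.le
    exact tendsto_nhds_unique (htt.congr' hev) tendsto_const_nhds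
  refine ⟨pj u, funext fun i => ?_⟩
  by_cases hia : i = a
  · rw [hia, ptt_a]; exact hua
  · by_cases hib : i = b
    · rw [hib, ptt_b hab]; exact hub
    · rw [ptt_oth hia hib]; exact hhalf _ i hia hib

/-- The basepoint family, as an element of Γ. -/
def fam (a b : Fin (n+1)) (hab : a ≠ b) (t : ℝ) : ↥(sphereGamma n) :=
  ⟨(ptt a b (cl t) 0, ptt a b 1 1), ptt_mem_gamma a b hab (cl_mem t)⟩

lemma continuous_fam (a b : Fin (n+1)) (hab : a ≠ b) : Continuous (fam a b hab) := by
  apply Continuous.subtype_mk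
  apply Continuous.prodMk
  · apply continuous_pi
    intro i
    by_cases hia : i = a
    · have he : (fun t : ℝ => ptt a b (cl t) 0 i) = fun t => cl t := by
        funext t; unfold ptt; rw [if_pos hia]
      rw [he]; exact continuous_cl
    · have he : (fun t : ℝ => ptt a b (cl t) 0 i) = fun _ => if i = b then 0 else 1/2 := by
        funext t; unfold ptt; rw [if_neg hia]
      rw [he]; exact continuous_const
  · exact continuous_const

lemma no_global_section (hn : 1 ≤ n) :
    ¬ ∃ sec : C(↥(sphereGamma n), SphereDiPath n),
      ∀ p, (sec p).1 0 = p.1.1 ∧ (sec p).1 1 = p.1.2 := by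
  rintro ⟨sec, hsec⟩
  have main : ∀ (a b : Fin (n+1)) (hab : a ≠ b),
      ∃ s : unitInterval, (sec (fam a b hab 0)).1 s = ptt a b 1 0 := by
    intro a b hab
    set h : ℝ → C(unitInterval, Pt n) := fun t => (sec (fam a b hab t)).1 with hh
    have hhc : Continuous h :=
      continuous_subtype_val.comp (sec.continuous.comp (continuous_fam a b hab))
    set Cq : Set C(unitInterval, Pt n) := {γ | ∃ s, γ s = ptt a b 1 0} with hCq
    have hCqclosed : IsClosed Cq := by
      rw [← isOpen_compl_iff]
      have he : Cqᶜ = {γ : C(unitInterval, Pt n) |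
          Set.MapsTo γ Set.univ ({ptt a b 1 0}ᶜ)} := by
        ext γ
        simp only [hCq, Set.mem_compl_iff, Set.mem_setOf_eq, not_exists, Set.MapsTo,
          Set.mem_univ, Set.mem_compl_iff, Set.mem_singleton_iff, forall_const]
      rw [he]
      exact ContinuousMap.isOpen_setOf_mapsTo isCompact_univ isOpen_compl_singleton
    have hmem : ∀ t ∈ Ioo (0:ℝ) 1, h t ∈ Cq := by
      intro t htIoo
      have hclt : cl t = t := cl_of_mem ⟨htIoo.1.le, htIoo.2.le⟩
      apply forced_passage hab htIoo.1 (h t) (sec (fam a b hab t)).2.1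
        (sec (fam a b hab t)).2.2
      · rw [(hsec (fam a b hab t)).1]
        show ptt a b (cl t) 0 = ptt a b t 0
        rw [hclt]
      · exact (hsec (fam a b hab t)).2
    have hNB : (nhdsWithin (0:ℝ) (Ioo 0 1)).NeBot := by
      rw [← mem_closure_iff_nhdsWithin_neBot, closure_Ioo (by norm_num : (0:ℝ) ≠ 1)]
      exact ⟨le_rfl, zero_le_one⟩
    have htt : Filter.Tendsto h (nhdsWithin (0:ℝ) (Ioo 0 1)) (nhds (h 0)) :=
      hhc.continuousAt.continuousWithinAt
    have hev : ∀ᶠ t in nhdsWithin (0:ℝ) (Ioo 0 1), h t ∈ Cq :=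
      Filter.eventually_iff_exists_mem.2 ⟨Ioo 0 1, self_mem_nhdsWithin, hmem⟩
    exact hCqclosed.mem_of_tendsto htt hev
  -- instantiate with (0,1) and (1,0)
  have h1lt : 1 < n + 1 := by omega
  have hne01 : (0 : Fin (n+1)) ≠ 1 := by
    intro h
    have hv := congrArg Fin.val h
    rw [Fin.val_zero, Fin.val_one', Nat.mod_eq_of_lt h1lt] at hv
    exact absurd hv (by norm_num)
  obtain ⟨s1, hs1⟩ := main 0 1 hne01
  obtain ⟨s2, hs2⟩ := main 1 0 hne01.symm
  have hbase : fam (0 : Fin (n+1)) 1 hne01 0 = fam 1 0 hne01.symm 0 := by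
    apply Subtype.ext
    show (ptt 0 1 (cl 0) 0, ptt 0 1 1 1) = (ptt 1 0 (cl 0) 0, ptt 1 0 1 1)
    have hcl0 : cl 0 = 0 := cl_of_mem ⟨le_rfl, zero_le_one⟩
    rw [hcl0]
    exact Prod.ext (ptt_symm hne01 0) (ptt_symm hne01 1)
  rw [← hbase] at hs2
  have hmono := (sec (fam (0 : Fin (n+1)) 1 hne01 0)).2.2
  rcases le_total s1 s2 with h | h
  · have hle := hmono 0 h
    simp only at hle
    rw [congrFun hs1 0, congrFun hs2 0] at hle
    rw [ptt_a, ptt_b hne01.symm] at hle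
    norm_num at hle
  · have hle := hmono 1 h
    simp only at hle
    rw [congrFun hs2 1, congrFun hs1 1] at hle
    rw [ptt_a, ptt_b hne01] at hle
    norm_num at hle

end

end DTCAux

/-- `dTC(S⃗ⁿ) = 2` for `n ≥ 1`: there is no continuous global section of the
dipath space map `χ : P⃗(S⃗ⁿ) → Γ`, but `Γ` is the disjoint union of two ENRs,
each admitting a continuous local section of `χ`. -/
theorem dTC_directed_sphere_eq_two (n : ℕ) (hn : 1 ≤ n) :
    (¬ ∃ sec : C(↥(sphereGamma n), SphereDiPath n),
        ∀ p, (sec p).1 0 = p.1.1 ∧ (sec p).1 1 = p.1.2) ∧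
    ∃ A1 A2 : Set ((Fin (n + 1) → ℝ) × (Fin (n + 1) → ℝ)),
      A1 ∪ A2 = sphereGamma n ∧ Disjoint A1 A2 ∧ IsENR A1 ∧ IsENR A2 ∧
      (∃ sec : C(↥A1, SphereDiPath n),
        ∀ p, (sec p).1 0 = p.1.1 ∧ (sec p).1 1 = p.1.2) ∧
      (∃ sec : C(↥A2, SphereDiPath n),
        ∀ p, (sec p).1 0 = p.1.1 ∧ (sec p).1 1 = p.1.2) := by
  constructor
  · exact DTCAux.no_global_section hn
  · refine ⟨DTCAux.Bset (DTCAux.ord1 n), sphereGamma n \ DTCAux.Bset (DTCAux.ord1 n),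
      ?_, ?_, ?_, ?_, ?_, ?_⟩
    · exact Set.union_diff_cancel (DTCAux.Bset_subset_gamma DTCAux.ord1_surj DTCAux.ord1_le)
    · exact disjoint_sdiff_self_right
    · exact DTCAux.isENR_Bset _
    · exact DTCAux.isENR_A2
    · exact DTCAux.exists_sec DTCAux.ord1_surj DTCAux.ord1_le _ (fun _ hp => hp)
    · apply DTCAux.exists_sec DTCAux.ord2_surj DTCAux.ord2_le
      intro p hp
      have hu : p ∈ DTCAux.Bset (DTCAux.ord1 n) ∪ DTCAux.Bset (DTCAux.ord2 n) := by
        rw [← DTCAux.gamma_eq_union]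
        exact hp.1
      rcases hu with h | h
      · exact absurd h hp.2
      · exact h
end

section
/- For n ≥ 1, x ∈ (0,1), and t ∈ (0,1), every directed path in ∂I^{n+1} from (t,0,x,...,x) to (1,1,x,...,x) has image contained in (([0,1]×{0}) ∪ ({1}×[0,1])) × {x}^{n−1}, and every directed path from (0,t,x,...,x) to (1,1,x,...,x) has image contained in (({0}×[0,1]) ∪ ([0,1]×{1})) × {x}^{n−1}. -/
open Set Filter Topology


lemma key_halfsquare (f g : ℝ → ℝ) (hg : Continuous g)
    (hfm : Monotone f) (hgm : Monotone g) (hg0 : g 0 = 0)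
    (hf1 : ∀ r ∈ Set.Icc (0:ℝ) 1, f r ≤ 1)
    (htri : ∀ r ∈ Set.Icc (0:ℝ) 1, f r = 1 ∨ g r = 0 ∨ g r = 1) :
    ∀ r ∈ Set.Icc (0:ℝ) 1, g r = 0 ∨ f r = 1 := by
  set B : Set ℝ := {r | r ∈ Set.Icc (0:ℝ) 1 ∧ g r = 0} with hB
  have hBne : B.Nonempty := ⟨0, ⟨le_refl _, zero_le_one⟩, hg0⟩
  have hBbdd : BddAbove B := ⟨1, fun r hr => hr.1.2⟩
  have hBcl : IsClosed B := by
    have : B = Set.Icc (0:ℝ) 1 ∩ {r | g r = 0} := rfl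
    rw [this]
    exact isClosed_Icc.inter (isClosed_eq hg continuous_const)
  set σ := sSup B with hσ
  have hσB : σ ∈ B := hBcl.csSup_mem hBne hBbdd
  intro r hr
  rcases le_or_gt r σ with h | h
  · left
    have h1 : g r ≤ g σ := hgm h
    have h2 : (0:ℝ) ≤ g r := hg0 ▸ hgm hr.1
    rw [hσB.2] at h1
    linarith
  · right
    have hev1 : ∀ᶠ r' in 𝓝 σ, g r' < 1 := by
      have := hg.continuousAt (x := σ)
      have h01 : g σ < 1 := by rw [hσB.2]; norm_num
      exact this.eventually_lt continuousAt_const h01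
    have hev2 : ∀ᶠ r' in 𝓝 σ, r' < r := eventually_iff.mpr (Iio_mem_nhds h)
    have hev : ∀ᶠ r' in 𝓝[>] σ, g r' < 1 ∧ r' < r ∧ σ < r' := by
      filter_upwards [nhdsWithin_le_nhds (hev1.and hev2), self_mem_nhdsWithin] with r' h1 h2
      exact ⟨h1.1, h1.2, h2⟩
    obtain ⟨r', hg1, hrr, hσr⟩ := hev.exists
    have hr' : r' ∈ Set.Icc (0:ℝ) 1 := ⟨le_trans hσB.1.1 hσr.le, le_trans hrr.le hr.2⟩
    have hgr' : g r' ≠ 0 := fun h0 => absurd (le_csSup hBbdd (⟨hr', h0⟩ : r' ∈ B)) (not_le.mpr hσr)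
    have hfr' : f r' = 1 := by
      rcases htri r' hr' with h | h | h
      · exact h
      · exact absurd h hgr'
      · linarith
    have := hfm hrr.le
    rw [hfr'] at this
    exact le_antisymm (hf1 r hr) this


/-- For `n ≥ 1`, `x ∈ (0,1)` and `t ∈ (0,1)`: every directed path in
`∂I^{n+1}` from `(t,0,x,…,x)` to `(1,1,x,…,x)` has image in
`(([0,1]×{0}) ∪ ({1}×[0,1])) × {x}^{n-1}`, and every directed path from
`(0,t,x,…,x)` to `(1,1,x,…,x)` has image in
`(({0}×[0,1]) ∪ ([0,1]×{1})) × {x}^{n-1}`. -/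
theorem diPath_sphere_halfsquare_slices (n : ℕ) (hn : 1 ≤ n) (x t : ℝ)
    (hx : x ∈ Set.Ioo (0 : ℝ) 1) (ht : t ∈ Set.Ioo (0 : ℝ) 1)
    (γ : C(unitInterval, Fin (n + 1) → ℝ))
    (hb : ∀ s, γ s ∈ cubeBdry n) (hm : ∀ i, Monotone fun s => γ s i)
    (h1 : γ 1 = fun i : Fin (n + 1) => if (i : ℕ) < 2 then 1 else x) :
    ((γ 0 = fun i : Fin (n + 1) =>
        if (i : ℕ) = 0 then t else if (i : ℕ) = 1 then 0 else x) →
      ∀ s, ((γ s 0 ∈ Set.Icc (0 : ℝ) 1 ∧ γ s 1 = 0) ∨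
              (γ s 0 = 1 ∧ γ s 1 ∈ Set.Icc (0 : ℝ) 1)) ∧
        ∀ i : Fin (n + 1), 2 ≤ (i : ℕ) → γ s i = x) ∧
    ((γ 0 = fun i : Fin (n + 1) =>
        if (i : ℕ) = 0 then 0 else if (i : ℕ) = 1 then t else x) →
      ∀ s, ((γ s 0 = 0 ∧ γ s 1 ∈ Set.Icc (0 : ℝ) 1) ∨
              (γ s 0 ∈ Set.Icc (0 : ℝ) 1 ∧ γ s 1 = 1)) ∧
        ∀ i : Fin (n + 1), 2 ≤ (i : ℕ) → γ s i = x) := by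
  -- the projection ℝ → unitInterval
  set π : ℝ → unitInterval := Set.projIcc 0 1 zero_le_one with hπ
  have hπcoe : ∀ s : unitInterval, π (s : ℝ) = s := fun s => Set.projIcc_val zero_le_one s
  have hπ0 : π 0 = 0 := by
    have := hπcoe 0
    simpa using this
  -- endpoint values of first two coordinates at time 1
  have hv1 : ((1 : Fin (n+1)) : ℕ) = 1 := by
    simp [Fin.val_one', Nat.mod_eq_of_lt (show 1 < n + 1 by omega)]
  have hγ1 : ∀ i : Fin (n+1), (i : ℕ) < 2 → γ 1 i = 1 := by
    intro i hi; rw [h1]; simp [hi]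
  have hγ1' : ∀ i : Fin (n+1), 2 ≤ (i : ℕ) → γ 1 i = x := by
    intro i hi; rw [h1]; simp [Nat.not_lt.mpr hi]
  -- generic constancy of high coordinates given start value x
  have hconst : ∀ (start : Fin (n+1) → ℝ), γ 0 = start →
      (∀ i : Fin (n+1), 2 ≤ (i : ℕ) → start i = x) →
      ∀ s (i : Fin (n+1)), 2 ≤ (i : ℕ) → γ s i = x := by
    intro start h0 hst s i hi
    have hle : γ 0 i ≤ γ s i := hm i (unitInterval.nonneg' : (0:unitInterval) ≤ s)
    have hge : γ s i ≤ γ 1 i := hm i (unitInterval.le_one' : s ≤ 1)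
    rw [h0, hst i hi] at hle
    rw [hγ1' i hi] at hge
    linarith
  -- boundary dichotomy for first two coordinates (given high coords = x)
  have hdich : ∀ s, (∀ i : Fin (n+1), 2 ≤ (i : ℕ) → γ s i = x) →
      (γ s 0 = 0 ∨ γ s 0 = 1) ∨ (γ s 1 = 0 ∨ γ s 1 = 1) := by
    intro s hc
    obtain ⟨i, hi⟩ := (hb s).2
    rcases lt_or_ge (i : ℕ) 2 with h2 | h2
    · interval_cases h : (i : ℕ)
      · left
        have : i = 0 := Fin.ext h
        rwa [this] at hi
      · right
        have : i = 1 := Fin.ext (by rw [hv1]; exact h)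
        rwa [this] at hi
    · exfalso
      rw [hc i h2] at hi
      rcases hi with h | h
      · exact absurd h (ne_of_gt hx.1)
      · exact absurd h (ne_of_lt hx.2)
  constructor
  · -- start at (t, 0, x, ..., x)
    intro h0
    have hst : ∀ i : Fin (n+1), 2 ≤ (i : ℕ) → (fun i : Fin (n + 1) =>
        if (i : ℕ) = 0 then t else if (i : ℕ) = 1 then 0 else x) i = x := by
      intro i hi; simp [show (i:ℕ) ≠ 0 by omega, show (i:ℕ) ≠ 1 by omega]
    have hc := hconst _ h0 hst
    have h00 : γ 0 0 = t := by rw [h0]; norm_num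
    have h01 : γ 0 1 = 0 := by rw [h0]; simp [hv1, show n ≠ 0 by omega, show 0 < n by omega]
    -- f = first coord, g = second coord
    have hkey := key_halfsquare (fun r => γ (π r) 0) (fun r => γ (π r) 1)
      (((continuous_apply (1 : Fin (n+1))).comp γ.continuous).comp continuous_projIcc)
      ((hm 0).comp (monotone_projIcc zero_le_one))
      ((hm 1).comp (monotone_projIcc zero_le_one))
      (by simp only [hπ0]; exact h01)
      (by intro r _; exact ((hb (π r)).1 0).2)
      (by
        intro r _
        have hc' := hc (π r)
        have hpos : γ (π r) 0 ≠ 0 := by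
          have : γ 0 0 ≤ γ (π r) 0 := hm 0 unitInterval.nonneg'
          rw [h00] at this
          linarith [ht.1]
        rcases hdich (π r) hc' with (h | h) | h
        · exact absurd h hpos
        · exact Or.inl h
        · exact Or.inr h)
    intro s
    refine ⟨?_, hc s⟩
    have := hkey (s : ℝ) s.2
    simp only [hπcoe] at this
    rcases this with h | h
    · exact Or.inl ⟨(hb s).1 0, h⟩
    · exact Or.inr ⟨h, (hb s).1 1⟩
  · -- start at (0, t, x, ..., x)
    intro h0
    have hst : ∀ i : Fin (n+1), 2 ≤ (i : ℕ) → (fun i : Fin (n + 1) =>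
        if (i : ℕ) = 0 then 0 else if (i : ℕ) = 1 then t else x) i = x := by
      intro i hi; simp [show (i:ℕ) ≠ 0 by omega, show (i:ℕ) ≠ 1 by omega]
    have hc := hconst _ h0 hst
    have h00 : γ 0 0 = 0 := by rw [h0]; norm_num
    have h01 : γ 0 1 = t := by rw [h0]; simp [hv1, show n ≠ 0 by omega, show 0 < n by omega]
    have hkey := key_halfsquare (fun r => γ (π r) 1) (fun r => γ (π r) 0)
      (((continuous_apply (0 : Fin (n+1))).comp γ.continuous).comp continuous_projIcc)
      ((hm 1).comp (monotone_projIcc zero_le_one))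
      ((hm 0).comp (monotone_projIcc zero_le_one))
      (by simp only [hπ0]; exact h00)
      (by intro r _; exact ((hb (π r)).1 1).2)
      (by
        intro r _
        have hc' := hc (π r)
        have hpos : γ (π r) 1 ≠ 0 := by
          have : γ 0 1 ≤ γ (π r) 1 := hm 1 unitInterval.nonneg'
          rw [h01] at this
          linarith [ht.1]
        rcases hdich (π r) hc' with (h | h) | (h | h)
        · exact Or.inr (Or.inl h)
        · exact Or.inr (Or.inr h)
        · exact absurd h hpos
        · exact Or.inl h)
    intro s
    refine ⟨?_, hc s⟩
    have := hkey (s : ℝ) s.2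
    simp only [hπcoe] at this
    rcases this with h | h
    · exact Or.inl ⟨h, (hb s).1 1⟩
    · exact Or.inr ⟨(hb s).1 0, h⟩
end

section
/- If (x,y) ∈ Γ for the directed n-sphere and x_j = 0, y_j = 1 for some j, while x_i ∈ (0,1) and y_i ∈ (0,1) for all i ≠ j, then we reach a contradiction; i.e., no pair of the form (−⋯−0−⋯−, −⋯−1−⋯−) (with all other coordinates strictly between 0 and 1) belongs to the reachability set Γ of ∂I^{n+1}. -/
/-- No pair of the form `(-⋯-0-⋯-, -⋯-1-⋯-)` (with all coordinates other than
the `j`-th strictly between `0` and `1`) lies in the reachability set of the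
directed `n`-sphere: there is no continuous coordinatewise non-decreasing path
in `∂I^{n+1}` from `x` to `y`. -/
theorem not_reachable_interior_pair (n : ℕ) (j : Fin (n + 1))
    (x y : Fin (n + 1) → ℝ) (hxj : x j = 0) (hyj : y j = 1)
    (hx : ∀ i, i ≠ j → x i ∈ Set.Ioo (0 : ℝ) 1)
    (hy : ∀ i, i ≠ j → y i ∈ Set.Ioo (0 : ℝ) 1) :
    ¬ ∃ γ : C(unitInterval, Fin (n + 1) → ℝ),
        (∀ s, γ s ∈ cubeBdry n) ∧ (∀ i, Monotone fun s => γ s i) ∧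
        γ 0 = x ∧ γ 1 = y := by
  rintro ⟨γ, hbd, hmono, h0, h1⟩
  -- IVT on the j-th coordinate, via extension to ℝ
  have hcont : Continuous fun t : ℝ => γ (Set.projIcc 0 1 zero_le_one t) j :=
    ((continuous_apply j).comp γ.continuous).comp (continuous_projIcc)
  have hIVT := intermediate_value_Icc (zero_le_one : (0:ℝ) ≤ 1) hcont.continuousOn
  have hmem : (1/2 : ℝ) ∈ Set.Icc ((fun t : ℝ => γ (Set.projIcc 0 1 zero_le_one t) j) 0)
      ((fun t : ℝ => γ (Set.projIcc 0 1 zero_le_one t) j) 1) := by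
    simp only [Set.projIcc_left, Set.projIcc_right]
    rw [show (⟨0, le_refl 0, zero_le_one⟩ : Set.Icc (0:ℝ) 1) = (0 : unitInterval) from rfl,
      show (⟨1, zero_le_one, le_refl 1⟩ : Set.Icc (0:ℝ) 1) = (1 : unitInterval) from rfl,
      h0, h1, hxj, hyj]
    constructor <;> norm_num
  obtain ⟨t, _, hs'⟩ := hIVT hmem
  set s : unitInterval := Set.projIcc 0 1 zero_le_one t with hsdef
  have hs : γ s j = 1/2 := hs'
  obtain ⟨_, i, hi⟩ := hbd s
  have hi01 : γ s i ∈ Set.Ioo (0:ℝ) 1 := by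
    by_cases hij : i = j
    · subst hij
      rw [hs]; constructor <;> norm_num
    · have hlow : x i ≤ γ s i := by
        have := hmono i (show (0:unitInterval) ≤ s from s.2.1)
        simpa [h0] using this
      have hhigh : γ s i ≤ y i := by
        have := hmono i (show s ≤ (1:unitInterval) from s.2.2)
        simpa [h1] using this
      exact ⟨lt_of_lt_of_le (hx i hij).1 hlow, lt_of_le_of_lt hhigh (hy i hij).2⟩
  rcases hi with h | h <;> rw [h] at hi01 <;> exact absurd hi01 (by norm_num)
end
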